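/- arXiv:2506.09810 — 7 statements merged into one kernel-verified Lean document; each statement's English description precedes it below -/
import Mathlib

section
/- Let P and Q be probability measures on a measurable space Ω with P absolutely continuous with respect to Q, and let g : Ω → ℝ be measurable such that g is P-integrable and e^{g−1} is Q-integrable. Then the Kullback–Leibler divergence satisfies KL(P‖Q) ≥ ∫ g dP − ∫ e^{g−1} dQ. -/
open MeasureTheory
open scoped Classical

/-- The Kullback–Leibler divergence `KL(P‖Q) = ∫ log (dP/dQ) dP`, with value `+∞`
when `P` is not absolutely continuous with respect to `Q` (or the integral is not defined). -/
noncomputable def klDivergence {Ω : Type*} [MeasurableSpace Ω] (P Q : Measure Ω) : EReal :=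
  if P ≪ Q ∧ Integrable (fun ω => Real.log ((P.rnDeriv Q ω).toReal)) P
  then ((∫ ω, Real.log ((P.rnDeriv Q ω).toReal) ∂P : ℝ) : EReal)
  else ⊤

lemma key_ineq (a b : ℝ) (ha : 0 ≤ a) : a * b ≤ a * Real.log a + Real.exp (b - 1) := by
  rcases ha.eq_or_lt with h | h
  · simp [← h]
    positivity
  · have ht : 0 < Real.exp (b - 1) / a := by positivity
    have hlog := Real.log_le_sub_one_of_pos ht
    rw [Real.log_div (Real.exp_ne_zero _) (ne_of_gt h), Real.log_exp] at hlog
    have := mul_le_mul_of_nonneg_left hlog h.le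
    have hda : a * (Real.exp (b - 1) / a) = Real.exp (b - 1) := by
      field_simp
    nlinarith [this, hda]

/-- NWJ / Donsker–Varadhan-type variational lower bound:
for probability measures `P ≪ Q` and a measurable `g` with `g` `P`-integrable and
`exp (g - 1)` `Q`-integrable, `KL(P‖Q) ≥ ∫ g dP − ∫ e^{g−1} dQ`. -/
theorem stmt_0 {Ω : Type*} [MeasurableSpace Ω] (P Q : Measure Ω)
    [IsProbabilityMeasure P] [IsProbabilityMeasure Q]
    (hPQ : P ≪ Q) (g : Ω → ℝ) (hg : Measurable g)
    (hgP : Integrable g P)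
    (hgQ : Integrable (fun ω => Real.exp (g ω - 1)) Q) :
    ((∫ ω, g ω ∂P - ∫ ω, Real.exp (g ω - 1) ∂Q : ℝ) : EReal) ≤ klDivergence P Q := by
  rw [klDivergence]
  by_cases h : P ≪ Q ∧ Integrable (fun ω => Real.log ((P.rnDeriv Q ω).toReal)) P
  · rw [if_pos h]
    rw [EReal.coe_le_coe_iff]
    set f : Ω → ℝ := fun ω => ((P.rnDeriv Q ω).toReal)
    have hfg : Integrable (fun ω => f ω • g ω) Q :=
      (integrable_rnDeriv_smul_iff hPQ).mpr hgP
    have hflog : Integrable (fun ω => f ω • Real.log (f ω)) Q :=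
      (integrable_rnDeriv_smul_iff hPQ).mpr h.2
    have e1 : ∫ ω, g ω ∂P = ∫ ω, f ω • g ω ∂Q :=
      (integral_rnDeriv_smul hPQ).symm
    have e2 : ∫ ω, Real.log (f ω) ∂P = ∫ ω, f ω • Real.log (f ω) ∂Q :=
      (integral_rnDeriv_smul hPQ).symm
    have hmono : ∫ ω, f ω • g ω ∂Q
        ≤ ∫ ω, (f ω • Real.log (f ω) + Real.exp (g ω - 1)) ∂Q := by
      refine integral_mono_ae hfg (hflog.add hgQ) ?_
      filter_upwards with ω
      exact key_ineq (f ω) (g ω) ENNReal.toReal_nonneg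
    rw [integral_add hflog hgQ] at hmono
    simp only [smul_eq_mul] at *
    linarith [hmono, e1.symm ▸ hmono]
  · rw [if_neg h]
    exact le_top
end

section
/- For any measurable function ψ : 𝒳 × 𝒞 → ℝ, any measurable function a : 𝒳 × 𝒞^N → (0, ∞), and any fixed index i ∈ {1, …, N}, provided all expectations below are finite, I(X;C) ≥ 1 + E_{P_i}[ ψ(X, C_i) − log a(X, C_1, …, C_N) ] − E_Q[ e^{ψ(X, C_i)} / a(X, C_1, …, C_N) ]. -/
/-!
Write `ρ`, `κ` for the laws of `X`, `C` and `G (x, c)` for the density of the conditional law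
of `X` given `C = c` with respect to `ρ`. Then `law (X, C) = (ρ ⊗ κ).withDensity G` and
`P_i = Q.withDensity (G ∘ T)` with `T (x, cs) = (x, cs i)`, and `T` pushes `Q` forward to
`ρ ⊗ κ`. Since the density of `P_i` factors through `T`,
`KL(P_i ‖ Q) = KL(law (X, C) ‖ ρ ⊗ κ) = I(X;C)`. The bound is then the NWJ inequality
`E_P[f] ≤ KL(P ‖ Q) + E_Q[e^f] - 1` for `f = ψ (x, c_i) - log a (x, cs)`, obtained by
integrating `log t ≤ t - 1` at `t = e^f / (dP/dQ)` against `P`.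
-/

open MeasureTheory ProbabilityTheory Filter
open scoped Classical ENNReal Topology

/-- The mutual information `I(X;C) := KL(law(X,C) ‖ law(X) ⊗ law(C))`. -/
noncomputable def mutualInfo {Ω 𝓧 𝒞 : Type*} [MeasurableSpace Ω] [MeasurableSpace 𝓧]
    [MeasurableSpace 𝒞] (μ : Measure Ω) (X : Ω → 𝓧) (C : Ω → 𝒞) : EReal :=
  klDivergence (μ.map (fun ω => (X ω, C ω))) ((μ.map X).prod (μ.map C))

/-- The conditional law of `X` given `C = c`. -/
noncomputable def condLaw {Ω 𝓧 𝒞 : Type*} [MeasurableSpace Ω] [MeasurableSpace 𝓧]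
    [MeasurableSpace 𝒞] (μ : Measure Ω) (X : Ω → 𝓧) (C : Ω → 𝒞) (c : 𝒞) : Measure 𝓧 :=
  (μ[|C ⁻¹' {c}]).map X

/-- The law `P_i` of `(X, (C_1, …, C_N))` under which `C_1, …, C_N` are i.i.d. copies of `C`
and `X` is drawn from the conditional law of `X` given `C = C_i`, conditionally
independently of the other `C_j`. -/
noncomputable def Pmeas {Ω 𝓧 𝒞 : Type*} [MeasurableSpace Ω] [MeasurableSpace 𝓧]
    [MeasurableSpace 𝒞] (μ : Measure Ω) (X : Ω → 𝓧) (C : Ω → 𝒞) (N : ℕ) (i : Fin N) :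
    Measure (𝓧 × (Fin N → 𝒞)) :=
  (Measure.pi fun _ : Fin N => μ.map C).bind
    (fun cs => (condLaw μ X C (cs i)).map (fun x => (x, cs)))

/-- The law `Q` of `(X, (C_1, …, C_N))` under which `X` has the marginal law of `X` and is
independent of `C_1, …, C_N`, which are i.i.d. copies of `C`. -/
noncomputable def Qmeas {Ω 𝓧 𝒞 : Type*} [MeasurableSpace Ω] [MeasurableSpace 𝓧]
    [MeasurableSpace 𝒞] (μ : Measure Ω) (X : Ω → 𝓧) (C : Ω → 𝒞) (N : ℕ) :
    Measure (𝓧 × (Fin N → 𝒞)) :=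
  (μ.map X).prod (Measure.pi fun _ : Fin N => μ.map C)

theorem test : True := trivial

section KLDivergence

variable {α β : Type*} [MeasurableSpace α] [MeasurableSpace β]

lemma integral_le_integral_llr_add_integral_exp_sub_one {P Q : Measure β}
    [IsProbabilityMeasure P] [SigmaFinite Q] (hPQ : P ≪ Q) {f : β → ℝ} (hf : Integrable f P)
    (hexp : Integrable (fun x => Real.exp (f x)) Q) (hllr : Integrable (llr P Q) P) :
    ∫ x, f x ∂P ≤ ∫ x, llr P Q x ∂P + ∫ x, Real.exp (f x) ∂Q - 1 := by
  set d : β → ℝ := fun x => (P.rnDeriv Q x).toReal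
  set r : β → ℝ := fun x => Real.exp (f x) / d x
  have hd : Measurable d := (Measure.measurable_rnDeriv P Q).ennreal_toReal
  have hd_pos : ∀ᵐ x ∂P, 0 < d x := by
    filter_upwards [Measure.rnDeriv_pos hPQ, hPQ.ae_le (Measure.rnDeriv_lt_top P Q)]
      with x h0 htop
    exact ENNReal.toReal_pos h0.ne' htop.ne
  have hdr_le : ∀ x, d x * r x ≤ Real.exp (f x) := by
    intro x
    rcases (show 0 ≤ d x from ENNReal.toReal_nonneg).eq_or_lt with h | h
    · rw [← h, zero_mul]; exact (Real.exp_pos _).le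
    · exact le_of_eq (by simp only [r]; field_simp)
  have hdr_int : Integrable (fun x => d x * r x) Q := by
    refine hexp.mono (hd.aemeasurable.mul
      (hexp.aemeasurable.div hd.aemeasurable)).aestronglyMeasurable (ae_of_all _ fun x => ?_)
    have hdr_nonneg : 0 ≤ d x * r x :=
      mul_nonneg ENNReal.toReal_nonneg (div_nonneg (Real.exp_pos _).le ENNReal.toReal_nonneg)
    rw [Real.norm_of_nonneg hdr_nonneg, Real.norm_of_nonneg (Real.exp_pos _).le]
    exact hdr_le x
  have hr : Integrable r P := (integrable_toReal_rnDeriv_mul_iff hPQ).mp hdr_int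
  have hr_le : ∫ x, r x ∂P ≤ ∫ x, Real.exp (f x) ∂Q := by
    rw [← integral_toReal_rnDeriv_mul hPQ]
    exact integral_mono hdr_int hexp hdr_le
  have hpointwise : ∀ᵐ x ∂P, f x ≤ llr P Q x + r x - 1 := by
    filter_upwards [hd_pos] with x hx
    have h := Real.log_le_sub_one_of_pos (div_pos (Real.exp_pos (f x)) hx)
    rw [Real.log_div (Real.exp_pos _).ne' hx.ne', Real.log_exp] at h
    rw [llr_def]
    linarith
  calc ∫ x, f x ∂P ≤ ∫ x, (llr P Q x + r x - 1) ∂P :=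
        integral_mono_ae hf ((hllr.add hr).sub (integrable_const 1)) hpointwise
    _ = ∫ x, llr P Q x ∂P + ∫ x, r x ∂P - 1 := by
        rw [integral_sub (f := fun x => llr P Q x + r x) (hllr.add hr) (integrable_const 1),
          integral_add hllr hr, integral_const, probReal_univ, one_smul]
    _ ≤ _ := by linarith

lemma one_add_integral_sub_integral_exp_le_klDivergence {P Q : Measure β}
    [IsProbabilityMeasure P] [SigmaFinite Q] {f : β → ℝ} (hf : Integrable f P)
    (hexp : Integrable (fun x => Real.exp (f x)) Q) :
    ((1 + ∫ x, f x ∂P - ∫ x, Real.exp (f x) ∂Q : ℝ) : EReal) ≤ klDivergence P Q := by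
  unfold klDivergence
  split_ifs with h
  · have := integral_le_integral_llr_add_integral_exp_sub_one h.1 hf hexp h.2
    exact EReal.coe_le_coe_iff.mpr (by rw [llr_def] at this; linarith)
  · exact le_top

lemma map_withDensity_comp {Q : Measure β} {T : β → α} (hT : Measurable T) {g : α → ℝ≥0∞}
    (hg : Measurable g) : (Q.withDensity (g ∘ T)).map T = (Q.map T).withDensity g := by
  ext s hs
  rw [Measure.map_apply hT hs, withDensity_apply _ (hT hs), withDensity_apply _ hs,
    setLIntegral_map hs hg hT]
  rfl

lemma klDivergence_map_withDensity {Q : Measure β} [IsFiniteMeasure Q] {T : β → α}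
    (hT : Measurable T) {g : α → ℝ≥0∞} (hg : Measurable g) :
    klDivergence ((Q.map T).withDensity g) (Q.map T)
      = klDivergence (Q.withDensity (g ∘ T)) Q := by
  set P := Q.withDensity (g ∘ T)
  set ν := (Q.map T).withDensity g
  set F : α → ℝ := fun y => Real.log (ν.rnDeriv (Q.map T) y).toReal
  have hF : Measurable F :=
    Real.measurable_log.comp (Measure.measurable_rnDeriv _ _).ennreal_toReal
  have hmap : P.map T = ν := map_withDensity_comp hT hg
  have hllr : F ∘ T =ᵐ[P] llr P Q := by
    refine (withDensity_absolutelyContinuous Q _).ae_le ?_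
    have hP : P.rnDeriv Q =ᵐ[Q] g ∘ T := Measure.rnDeriv_withDensity Q (hg.comp hT)
    have hν : ∀ᵐ x ∂Q, ν.rnDeriv (Q.map T) (T x) = g (T x) :=
      ae_of_ae_map hT.aemeasurable (Measure.rnDeriv_withDensity (Q.map T) hg)
    filter_upwards [hP, hν] with x hPx hνx
    simp only [Function.comp_apply, llr_def, F, hPx, hνx]
  have hint : Integrable F ν ↔ Integrable (llr P Q) P := by
    rw [← hmap, integrable_map_measure hF.aestronglyMeasurable hT.aemeasurable]
    exact integrable_congr hllr
  have hintegral : ∫ y, F y ∂ν = ∫ x, llr P Q x ∂P := by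
    rw [← hmap, integral_map hT.aemeasurable hF.aestronglyMeasurable]
    exact integral_congr_ae hllr
  have hνac : ν ≪ Q.map T := withDensity_absolutelyContinuous _ _
  have hPac : P ≪ Q := withDensity_absolutelyContinuous _ _
  unfold klDivergence
  simp only [hνac, hPac, true_and]
  exact if_congr hint (congrArg _ hintegral) rfl

end KLDivergence

section ConditionalLaw

variable {Ω 𝓧 γ : Type*} [MeasurableSpace Ω] [MeasurableSpace 𝓧] [MeasurableSpace γ]

lemma bind_map_prodMk_eq_withDensity [Countable γ] [MeasurableSingletonClass γ]
    (ρ : Measure 𝓧) [SigmaFinite ρ] (κ : Measure γ) [SFinite κ] (η : γ → Measure 𝓧)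
    [∀ c, SigmaFinite (η c)] (hη : ∀ c, η c ≪ ρ) :
    κ.bind (fun c => (η c).map (fun x => (x, c)))
      = (ρ.prod κ).withDensity (fun p => (η p.2).rnDeriv ρ p.1) := by
  have hG : Measurable (fun p : 𝓧 × γ => (η p.2).rnDeriv ρ p.1) :=
    measurable_from_prod_countable_left fun c => Measure.measurable_rnDeriv (η c) ρ
  ext s hs
  rw [Measure.bind_apply hs (measurable_of_countable _).aemeasurable, withDensity_apply _ hs,
    ← lintegral_indicator hs, lintegral_prod_symm' _ (hG.indicator hs)]
  refine lintegral_congr fun c => ?_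
  have hsec : MeasurableSet ((fun x => (x, c)) ⁻¹' s) := measurable_prodMk_right hs
  simp_rw [← Set.indicator_comp_right (fun x => (x, c))]
  rw [Measure.map_apply measurable_prodMk_right hs, lintegral_indicator hsec]
  exact (Measure.setLIntegral_rnDeriv' (hη c) hsec).symm

instance isFiniteMeasure_condLaw (μ : Measure Ω) [IsFiniteMeasure μ] (X : Ω → 𝓧) (C : Ω → γ)
    (c : γ) : IsFiniteMeasure (condLaw μ X C c) := by
  unfold condLaw; infer_instance

instance isFiniteMeasure_Qmeas (μ : Measure Ω) [IsFiniteMeasure μ] (X : Ω → 𝓧) (C : Ω → γ)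
    (N : ℕ) : IsFiniteMeasure (Qmeas μ X C N) := by
  unfold Qmeas; infer_instance

lemma condLaw_absolutelyContinuous (μ : Measure Ω) {X : Ω → 𝓧} (hX : Measurable X)
    (C : Ω → γ) (c : γ) : condLaw μ X C c ≪ μ.map X :=
  cond_absolutelyContinuous.map hX

lemma Qmeas_map_prodMk_eval (μ : Measure Ω) [IsProbabilityMeasure μ] {X : Ω → 𝓧} {C : Ω → γ}
    (hX : Measurable X) (hC : Measurable C) {N : ℕ} (i : Fin N) :
    (Qmeas μ X C N).map (fun p => (p.1, p.2 i)) = (μ.map X).prod (μ.map C) := by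
  have : IsProbabilityMeasure (μ.map C) := Measure.isProbabilityMeasure_map hC.aemeasurable
  have : IsProbabilityMeasure (μ.map X) := Measure.isProbabilityMeasure_map hX.aemeasurable
  exact ((MeasurePreserving.id (μ.map X)).prod (measurePreserving_eval _ i)).map_eq

lemma map_prodMk_eq_bind_condLaw [Fintype γ] [DiscreteMeasurableSpace γ] (μ : Measure Ω)
    [IsFiniteMeasure μ] {X : Ω → 𝓧} {C : Ω → γ} (hX : Measurable X) (hC : Measurable C) :
    μ.map (fun ω => (X ω, C ω))
      = (μ.map C).bind (fun c => (condLaw μ X C c).map (fun x => (x, c))) := by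
  ext s hs
  rw [Measure.bind_apply hs (measurable_of_countable _).aemeasurable, lintegral_fintype,
    Measure.map_apply (hX.prodMk hC) hs]
  conv_lhs => rw [← sum_meas_smul_cond_fiber hC μ]
  simp only [Measure.coe_finsetSum, Finset.sum_apply, Measure.smul_apply, smul_eq_mul]
  refine Finset.sum_congr rfl fun c _ => ?_
  have hc : MeasurableSet (C ⁻¹' {c}) := hC (measurableSet_singleton c)
  rw [Measure.map_apply hC (measurableSet_singleton c), mul_comm, condLaw,
    Measure.map_apply measurable_prodMk_right hs,
    Measure.map_apply hX (measurable_prodMk_right hs), cond_apply hc, cond_apply hc]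
  congr 3
  ext ω
  simp +contextual only [Set.mem_inter_iff, Set.mem_preimage, Set.mem_singleton_iff,
    and_congr_right_iff, implies_true]

end ConditionalLaw

theorem stmt_1_general {Ω 𝓧 : Type*} [MeasurableSpace Ω] [MeasurableSpace 𝓧]
    {M : ℕ} (μ : Measure Ω) [IsProbabilityMeasure μ]
    (X : Ω → 𝓧) (C : Ω → Fin M) (hX : Measurable X) (hC : Measurable C)
    (N : ℕ) (i : Fin N)
    (ψ : 𝓧 → Fin M → ℝ)
    (a : 𝓧 → (Fin N → Fin M) → ℝ)
    (hapos : ∀ x cs, 0 < a x cs)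
    (hintP : Integrable (fun p : 𝓧 × (Fin N → Fin M) =>
      ψ p.1 (p.2 i) - Real.log (a p.1 p.2)) (Pmeas μ X C N i))
    (hintQ : Integrable (fun p : 𝓧 × (Fin N → Fin M) =>
      Real.exp (ψ p.1 (p.2 i)) / a p.1 p.2) (Qmeas μ X C N)) :
    ((1 + (∫ p, (ψ p.1 (p.2 i) - Real.log (a p.1 p.2)) ∂(Pmeas μ X C N i))
        - ∫ p, Real.exp (ψ p.1 (p.2 i)) / a p.1 p.2 ∂(Qmeas μ X C N) : ℝ) : EReal)
      ≤ mutualInfo μ X C := by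
  set T : 𝓧 × (Fin N → Fin M) → 𝓧 × Fin M := fun p => (p.1, p.2 i)
  set G : 𝓧 × Fin M → ℝ≥0∞ := fun p => (condLaw μ X C p.2).rnDeriv (μ.map X) p.1
  have hT : Measurable T := measurable_fst.prodMk ((measurable_pi_apply i).comp measurable_snd)
  have hG : Measurable G := measurable_from_prod_countable_left fun c =>
    Measure.measurable_rnDeriv (condLaw μ X C c) (μ.map X)
  have hac : ∀ c, condLaw μ X C c ≪ μ.map X := condLaw_absolutelyContinuous μ hX C
  have hπ : (Qmeas μ X C N).map T = (μ.map X).prod (μ.map C) := Qmeas_map_prodMk_eval μ hX hC i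
  have hν : μ.map (fun ω => (X ω, C ω)) = ((Qmeas μ X C N).map T).withDensity G := by
    rw [hπ, map_prodMk_eq_bind_condLaw μ hX hC, bind_map_prodMk_eq_withDensity _ _ _ hac]
  have hP : Pmeas μ X C N i = (Qmeas μ X C N).withDensity (G ∘ T) :=
    bind_map_prodMk_eq_withDensity _ _ _ fun cs => hac (cs i)
  have : IsProbabilityMeasure ((Pmeas μ X C N i).map T) := by
    rw [hP, map_withDensity_comp hT hG, ← hν]
    exact Measure.isProbabilityMeasure_map (hX.prodMk hC).aemeasurable
  have : IsProbabilityMeasure (Pmeas μ X C N i) := Measure.isProbabilityMeasure_of_map T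
  have hexp : ∀ p : 𝓧 × (Fin N → Fin M),
      Real.exp (ψ p.1 (p.2 i) - Real.log (a p.1 p.2)) = Real.exp (ψ p.1 (p.2 i)) / a p.1 p.2 :=
    fun p => by rw [Real.exp_sub, Real.exp_log (hapos _ _)]
  rw [mutualInfo, hν, ← hπ, klDivergence_map_withDensity hT hG, ← hP]
  simp only [← hexp] at hintQ ⊢
  exact one_add_integral_sub_integral_exp_le_klDivergence hintP hintQ

/-- multi-sample NWJ lower bound, eq. (17) of the paper:
for any measurable `ψ : 𝒳 × 𝒞 → ℝ`, any measurable positive `a : 𝒳 × 𝒞^N → (0,∞)`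
and any fixed `i ∈ {1,…,N}`, provided all expectations are finite,
`I(X;C) ≥ 1 + E_{P_i}[ψ(X,C_i) − log a(X,C₁,…,C_N)] − E_Q[e^{ψ(X,C_i)} / a(X,C₁,…,C_N)]`. -/
theorem stmt_1 {Ω 𝓧 : Type*} [MeasurableSpace Ω] [MeasurableSpace 𝓧]
    {M : ℕ} (μ : Measure Ω) [IsProbabilityMeasure μ]
    (X : Ω → 𝓧) (C : Ω → Fin M) (hX : Measurable X) (hC : Measurable C)
    (hpos : ∀ c : Fin M, 0 < μ (C ⁻¹' {c}))
    (N : ℕ) (hN : 1 ≤ N) (i : Fin N)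
    (ψ : 𝓧 → Fin M → ℝ) (hψ : Measurable (fun p : 𝓧 × Fin M => ψ p.1 p.2))
    (a : 𝓧 → (Fin N → Fin M) → ℝ)
    (ha : Measurable (fun p : 𝓧 × (Fin N → Fin M) => a p.1 p.2))
    (hapos : ∀ x cs, 0 < a x cs)
    (hintP : Integrable (fun p : 𝓧 × (Fin N → Fin M) =>
      ψ p.1 (p.2 i) - Real.log (a p.1 p.2)) (Pmeas μ X C N i))
    (hintQ : Integrable (fun p : 𝓧 × (Fin N → Fin M) =>
      Real.exp (ψ p.1 (p.2 i)) / a p.1 p.2) (Qmeas μ X C N)) :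
    ((1 + (∫ p, (ψ p.1 (p.2 i) - Real.log (a p.1 p.2)) ∂(Pmeas μ X C N i))
        - ∫ p, Real.exp (ψ p.1 (p.2 i)) / a p.1 p.2 ∂(Qmeas μ X C N) : ℝ) : EReal)
      ≤ mutualInfo μ X C :=
  stmt_1_general μ X C hX hC N i ψ a hapos hintP hintQ
end

section
/- With the particular choice a(x, c_1, …, c_N) := (1/N) Σ_{j=1}^N e^{ψ(f(x), g₋(c_j))}, the averaged multi-sample NWJ expression satisfies the exact identity (1/N) Σ_{i=1}^N ( 1 + E_{P_i}[ ψ(f(X), g₊(C_i)) − log a(X, C_1, …, C_N) ] − E_Q[ e^{ψ(f(X), g₊(C_i))} / a(X, C_1, …, C_N) ] ) = 1 + log N − I_NCE^{self-p} − R, provided all expectations involved are finite. -/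
open MeasureTheory ProbabilityTheory Filter
open scoped Classical ENNReal Topology

/-!
Write `S(x, c) = Σ_j e^{ψ(f x, g₋(c_j))}`, so that `a = S / N`. Pointwise,
`ψ(f x, g₊(c_i)) - log a = log N + log (e^{ψ(f x, g₊(c_i))} / S)`, and since every `P_i` is a
probability measure the `i`-th NWJ term integrates to `log N` minus the `i`-th InfoNCE term.
On the `Q` side, summing the integrands `e^{ψ(f x, g₊(c_i))} / a` over `i` gives `N` times the
integrand of `R`.
-/

section Laws

variable {Ω 𝓧 𝒞 : Type*} [MeasurableSpace Ω] [MeasurableSpace 𝓧] [MeasurableSpace 𝒞]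
  {μ : Measure Ω} [IsProbabilityMeasure μ] {X : Ω → 𝓧} {C : Ω → 𝒞}

lemma isProbabilityMeasure_condLaw (hX : Measurable X) {c : 𝒞} (hc : μ (C ⁻¹' {c}) ≠ 0) :
    IsProbabilityMeasure (condLaw μ X C c) :=
  have := cond_isProbabilityMeasure hc
  Measure.isProbabilityMeasure_map hX.aemeasurable

lemma isProbabilityMeasure_Pmeas [Countable 𝒞] [MeasurableSingletonClass 𝒞]
    (hX : Measurable X) (hC : Measurable C) (hpos : ∀ c, μ (C ⁻¹' {c}) ≠ 0)
    {N : ℕ} (i : Fin N) : IsProbabilityMeasure (Pmeas μ X C N i) := by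
  have : IsProbabilityMeasure (μ.map C) := Measure.isProbabilityMeasure_map hC.aemeasurable
  refine isProbabilityMeasure_bind (measurable_of_countable _).aemeasurable
    (ae_of_all _ fun cs => ?_)
  have := isProbabilityMeasure_condLaw hX (hpos (cs i))
  exact Measure.isProbabilityMeasure_map (measurable_id.prodMk measurable_const).aemeasurable

end Laws

lemma integral_eq_const_sub_integral {α : Type*} [MeasurableSpace α] {P : Measure α}
    [IsProbabilityMeasure P] {F G : α → ℝ} {c : ℝ} (hFG : ∀ x, F x = c - G x)
    (hF : Integrable F P) : ∫ x, F x ∂P = c - ∫ x, G x ∂P := by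
  have hG : Integrable G P :=
    ((integrable_const c).sub hF).congr (ae_of_all _ fun x => by simp [hFG x])
  simp_rw [hFG]
  rw [integral_sub (integrable_const c) hG, integral_const, probReal_univ, one_smul]

lemma sub_log_mean_exp_eq_log_sub_neg_log_exp_div {n : ℕ} (hn : n ≠ 0) {s : ℝ} (hs : 0 < s)
    (t : ℝ) : t - Real.log (1 / n * s) = Real.log n - -Real.log (Real.exp t / s) := by
  rw [Real.log_mul (by positivity) hs.ne', Real.log_div (Real.exp_ne_zero t) hs.ne',
    Real.log_exp, one_div, Real.log_inv]
  ring

lemma Finset.sum_div_one_div_mul {ι : Type*} (s : Finset ι) (x : ι → ℝ) (n r : ℝ) :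
    ∑ i ∈ s, x i / (1 / n * r) = n * ((∑ i ∈ s, x i) / r) := by
  rw [← Finset.sum_div, div_mul_eq_div_div, div_div_eq_mul_div, div_one, mul_comm,
    mul_div_assoc]

theorem stmt_3_general {Ω 𝓧 : Type*} [MeasurableSpace Ω] [MeasurableSpace 𝓧]
    {M dz : ℕ} (μ : Measure Ω) [IsProbabilityMeasure μ]
    (X : Ω → 𝓧) (C : Ω → Fin M) (hX : Measurable X) (hC : Measurable C)
    (hpos : ∀ c : Fin M, 0 < μ (C ⁻¹' {c}))
    (N : ℕ) (hN : 1 ≤ N)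
    (f : 𝓧 → EuclideanSpace ℝ (Fin dz))
    (gp gm : Fin M → EuclideanSpace ℝ (Fin dz))
    (ψ : EuclideanSpace ℝ (Fin dz) → EuclideanSpace ℝ (Fin dz) → ℝ)
    (a : 𝓧 → (Fin N → Fin M) → ℝ)
    (ha : ∀ x cs, a x cs = (1 / N) * ∑ j : Fin N, Real.exp (ψ (f x) (gm (cs j))))
    (hintP : ∀ i : Fin N, Integrable (fun p : 𝓧 × (Fin N → Fin M) =>
      ψ (f p.1) (gp (p.2 i)) - Real.log (a p.1 p.2)) (Pmeas μ X C N i))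
    (hintQ : ∀ i : Fin N, Integrable (fun p : 𝓧 × (Fin N → Fin M) =>
      Real.exp (ψ (f p.1) (gp (p.2 i))) / a p.1 p.2) (Qmeas μ X C N)) :
    (1 / N) * ∑ i : Fin N,
      (1 + (∫ p, (ψ (f p.1) (gp (p.2 i)) - Real.log (a p.1 p.2)) ∂(Pmeas μ X C N i))
         - ∫ p, Real.exp (ψ (f p.1) (gp (p.2 i))) / a p.1 p.2 ∂(Qmeas μ X C N))
    = 1 + Real.log N
        - (1 / N) * ∑ i : Fin N, ∫ p, -Real.log (Real.exp (ψ (f p.1) (gp (p.2 i))) /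
            ∑ j : Fin N, Real.exp (ψ (f p.1) (gm (p.2 j)))) ∂(Pmeas μ X C N i)
        - ∫ p, (∑ k : Fin N, Real.exp (ψ (f p.1) (gp (p.2 k)))) /
            (∑ k : Fin N, Real.exp (ψ (f p.1) (gm (p.2 k)))) ∂(Qmeas μ X C N) := by
  have hN0 : N ≠ 0 := by omega
  have hS : ∀ p : 𝓧 × (Fin N → Fin M), 0 < ∑ j : Fin N, Real.exp (ψ (f p.1) (gm (p.2 j))) :=
    fun p => Finset.sum_pos (fun j _ => Real.exp_pos _) ⟨⟨0, by omega⟩, Finset.mem_univ _⟩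
  have hP : ∀ i : Fin N,
      ∫ p, (ψ (f p.1) (gp (p.2 i)) - Real.log (a p.1 p.2)) ∂(Pmeas μ X C N i)
        = Real.log N - ∫ p, -Real.log (Real.exp (ψ (f p.1) (gp (p.2 i))) /
            ∑ j : Fin N, Real.exp (ψ (f p.1) (gm (p.2 j)))) ∂(Pmeas μ X C N i) := fun i =>
    have := isProbabilityMeasure_Pmeas hX hC (fun c => (hpos c).ne') i
    integral_eq_const_sub_integral
      (fun p => by rw [ha]; exact sub_log_mean_exp_eq_log_sub_neg_log_exp_div hN0 (hS p) _)
      (hintP i)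
  have hQ : ∑ i : Fin N, ∫ p, Real.exp (ψ (f p.1) (gp (p.2 i))) / a p.1 p.2 ∂(Qmeas μ X C N)
      = N * ∫ p, (∑ k : Fin N, Real.exp (ψ (f p.1) (gp (p.2 k)))) /
          (∑ k : Fin N, Real.exp (ψ (f p.1) (gm (p.2 k)))) ∂(Qmeas μ X C N) := by
    simp_rw [← integral_finsetSum _ fun i _ => hintQ i, ← integral_const_mul, ha,
      Finset.sum_div_one_div_mul]
  simp only [hP, Finset.sum_sub_distrib, Finset.sum_add_distrib, hQ, Finset.sum_const,
    Finset.card_univ, Fintype.card_fin, nsmul_eq_mul]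
  field_simp
  ring

/-- key algebraic identity in the proof of Proposition 1:
with `a(x, c₁, …, c_N) := (1/N) Σ_j e^{ψ(f(x), g₋(c_j))}`, the averaged multi-sample NWJ
expression equals `1 + log N − I_NCE^{self-p} − R`. -/
theorem stmt_3 {Ω 𝓧 : Type*} [MeasurableSpace Ω] [MeasurableSpace 𝓧]
    {M dz : ℕ} (μ : Measure Ω) [IsProbabilityMeasure μ]
    (X : Ω → 𝓧) (C : Ω → Fin M) (hX : Measurable X) (hC : Measurable C)
    (hpos : ∀ c : Fin M, 0 < μ (C ⁻¹' {c}))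
    (N : ℕ) (hN : 1 ≤ N)
    (f : 𝓧 → EuclideanSpace ℝ (Fin dz)) (hf : Measurable f)
    (gp gm : Fin M → EuclideanSpace ℝ (Fin dz))
    (ψ : EuclideanSpace ℝ (Fin dz) → EuclideanSpace ℝ (Fin dz) → ℝ)
    (hψ : Measurable (fun p : EuclideanSpace ℝ (Fin dz) × EuclideanSpace ℝ (Fin dz) =>
      ψ p.1 p.2))
    (a : 𝓧 → (Fin N → Fin M) → ℝ)
    (ha : ∀ x cs, a x cs = (1 / N) * ∑ j : Fin N, Real.exp (ψ (f x) (gm (cs j))))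
    (hintP : ∀ i : Fin N, Integrable (fun p : 𝓧 × (Fin N → Fin M) =>
      ψ (f p.1) (gp (p.2 i)) - Real.log (a p.1 p.2)) (Pmeas μ X C N i))
    (hintQ : ∀ i : Fin N, Integrable (fun p : 𝓧 × (Fin N → Fin M) =>
      Real.exp (ψ (f p.1) (gp (p.2 i))) / a p.1 p.2) (Qmeas μ X C N)) :
    (1 / N) * ∑ i : Fin N,
      (1 + (∫ p, (ψ (f p.1) (gp (p.2 i)) - Real.log (a p.1 p.2)) ∂(Pmeas μ X C N i))
         - ∫ p, Real.exp (ψ (f p.1) (gp (p.2 i))) / a p.1 p.2 ∂(Qmeas μ X C N))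
    = 1 + Real.log N
        - (1 / N) * ∑ i : Fin N, ∫ p, -Real.log (Real.exp (ψ (f p.1) (gp (p.2 i))) /
            ∑ j : Fin N, Real.exp (ψ (f p.1) (gm (p.2 j)))) ∂(Pmeas μ X C N i)
        - ∫ p, (∑ k : Fin N, Real.exp (ψ (f p.1) (gp (p.2 k)))) /
            (∑ k : Fin N, Real.exp (ψ (f p.1) (gm (p.2 k)))) ∂(Qmeas μ X C N) :=
  stmt_3_general μ X C hX hC hpos N hN f gp gm ψ a ha hintP hintQ
end

section
/- The SoftNCE loss bounds mutual information as I(X;C) ≥ log N − I_NCE^{soft}. (Second item of Proposition 2.) -/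
open MeasureTheory ProbabilityTheory Filter
open scoped Classical ENNReal Topology

/-!
Write `r` for the density of the joint law `π` of `(X, C)` with respect to the product of the
marginals. Each `P_i` is the product law `Q` reweighted by `r (x, c_i)`, and it pushes forward to
`π` along `(x, c) ↦ (x, c_i)`, so `∫ log r (x, c_i) dP_i = I(X;C)`. Gibbs' inequality
`u ≤ exp u - 1`, applied to `u = log (N · softmax_i) - log r (x, c_i)` and integrated against
`P_i`, gives `log N - ℓ_i - I(X;C) ≤ N ∫ softmax_i dQ - 1`, where `ℓ_i` is the `i`-th term of the
loss. The softmax weights sum to one, so the right-hand sides average to zero.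
-/

open Real

theorem integral_sub_integral_log_density_le_integral_exp_sub_one {α : Type*}
    [MeasurableSpace α] {Q : Measure α}
    {ρ : α → ℝ≥0∞} (hρ : Measurable ρ) [IsProbabilityMeasure (Q.withDensity ρ)]
    {g : α → ℝ} (hg : Measurable g) (hgi : Integrable g (Q.withDensity ρ))
    (hρi : Integrable (fun a => log (ρ a).toReal) (Q.withDensity ρ))
    (hexp : Integrable (fun a => exp (g a)) Q) :
    ∫ a, g a ∂(Q.withDensity ρ) - ∫ a, log (ρ a).toReal ∂(Q.withDensity ρ)
      ≤ ∫ a, exp (g a) ∂Q - 1 := by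
  set P := Q.withDensity ρ
  set ℓ := fun a => log (ρ a).toReal
  have hρ_fin : ∀ᵐ a ∂Q, ρ a < ∞ := by
    refine ae_lt_top hρ ?_
    rw [← setLIntegral_univ, ← withDensity_apply _ MeasurableSet.univ, measure_univ]
    exact ENNReal.one_ne_top
  have hdensity : ∀ a, (ρ a).toReal * exp (g a - ℓ a) ≤ exp (g a) := by
    intro a
    rcases ENNReal.toReal_nonneg.eq_or_lt with h | h
    · rw [← h, zero_mul]; positivity
    · rw [exp_sub, exp_log h, mul_div_cancel₀ _ h.ne']
  have hint : Integrable (fun a => exp (g a - ℓ a)) P := by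
    rw [integrable_withDensity_iff_integrable_smul' hρ hρ_fin]
    refine hexp.mono' ?_ (ae_of_all _ fun a => ?_)
    · exact (hρ.ennreal_toReal.smul (hg.sub hρ.ennreal_toReal.log).exp).aestronglyMeasurable
    · rw [Real.norm_eq_abs, abs_of_nonneg (by positivity), smul_eq_mul]
      exact hdensity a
  calc ∫ a, g a ∂P - ∫ a, ℓ a ∂P = ∫ a, (g a - ℓ a) ∂P := (integral_sub hgi hρi).symm
    _ ≤ ∫ a, (exp (g a - ℓ a) - 1) ∂P :=
      integral_mono (hgi.sub hρi) (hint.sub (integrable_const 1))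
        fun a => by linarith [add_one_le_exp (g a - ℓ a)]
    _ = ∫ a, (ρ a).toReal • exp (g a - ℓ a) ∂Q - 1 := by
      rw [integral_sub hint (integrable_const 1), integral_const, probReal_univ, one_smul,
        integral_withDensity_eq_integral_toReal_smul hρ hρ_fin]
    _ ≤ ∫ a, exp (g a) ∂Q - 1 := by
      gcongr ?_ - 1
      exact integral_mono_of_nonneg (ae_of_all _ fun a => by positivity) hexp
        (ae_of_all _ hdensity)

theorem map_withDensity_comp_s5 {α β : Type*} [MeasurableSpace α] [MeasurableSpace β]
    {μ : Measure α} {T : α → β} (hT : Measurable T) {r : β → ℝ≥0∞} (hr : Measurable r) :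
    (μ.withDensity fun a => r (T a)).map T = (μ.map T).withDensity r := by
  ext s hs
  rw [Measure.map_apply hT hs, withDensity_apply _ (hT hs), withDensity_apply _ hs,
    setLIntegral_map hs hr hT]

theorem bind_map_prodMk_withDensity {α γ : Type*} [MeasurableSpace α] [MeasurableSpace γ]
    [Countable γ] [MeasurableSingletonClass γ] {ν : Measure α} {m : Measure γ} [SFinite ν]
    [SFinite m] {g : α × γ → ℝ≥0∞} (hg : Measurable g) :
    m.bind (fun c => (ν.withDensity (fun x => g (x, c))).map (·, c))
      = (ν.prod m).withDensity g := by
  ext s hs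
  have hs_slice : ∀ c : γ, MeasurableSet ((·, c) ⁻¹' s) := fun c => measurable_prodMk_right hs
  rw [Measure.bind_apply hs (measurable_of_countable _).aemeasurable, withDensity_apply _ hs,
    ← lintegral_indicator hs, lintegral_prod_symm _ (hg.indicator hs).aemeasurable]
  refine lintegral_congr fun c => ?_
  rw [Measure.map_apply measurable_prodMk_right hs, withDensity_apply _ (hs_slice c),
    ← lintegral_indicator (hs_slice c)]
  rfl

section Softmax

variable {ι : Type*} [Fintype ι]

noncomputable def softmax (a : ι → ℝ) (i : ι) : ℝ :=
  exp (a i) / ∑ j, exp (a j)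

theorem measurable_softmax (i : ι) : Measurable fun a : ι → ℝ => softmax a i := by
  unfold softmax
  fun_prop

variable [Nonempty ι]

theorem softmax_pos (a : ι → ℝ) (i : ι) : 0 < softmax a i :=
  div_pos (exp_pos _) (Finset.sum_pos (fun _ _ => exp_pos _) Finset.univ_nonempty)

theorem sum_softmax (a : ι → ℝ) : ∑ i, softmax a i = 1 := by
  simp only [softmax]
  rw [← Finset.sum_div, div_self (Finset.sum_pos (fun _ _ => exp_pos _) Finset.univ_nonempty).ne']

theorem softmax_le_one (a : ι → ℝ) (i : ι) : softmax a i ≤ 1 :=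
  sum_softmax a ▸ Finset.single_le_sum (fun j _ => (softmax_pos a j).le) (Finset.mem_univ i)

end Softmax

section NCE

variable {α β ι : Type*} [MeasurableSpace α] [MeasurableSpace β] [Fintype ι] [Nonempty ι]
  {Q : Measure α} [IsProbabilityMeasure Q] {ν : Measure β} [IsProbabilityMeasure ν]
  {r : β → ℝ≥0∞} {s : α → ι → ℝ}

theorem integrable_softmax_comp (hs : Measurable s) (i : ι) :
    Integrable (fun a => softmax (s a) i) Q :=
  Integrable.of_bound ((measurable_softmax i).comp hs).aestronglyMeasurable 1
    (ae_of_all _ fun a => by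
      rw [Real.norm_of_nonneg (softmax_pos _ _).le]; exact softmax_le_one _ _)

theorem log_card_sub_integral_neg_log_softmax_le (hr : Measurable r) {T : α → β}
    (hT : Measurable T) (hPT : (Q.withDensity fun a => r (T a)).map T = ν)
    (hs : Measurable s) (i : ι)
    (hint : Integrable (fun a => -log (softmax (s a) i)) (Q.withDensity fun a => r (T a)))
    (hL : Integrable (fun b => log (r b).toReal) ν) :
    log (Fintype.card ι : ℝ) - ∫ a, -log (softmax (s a) i) ∂(Q.withDensity fun a => r (T a))
        - ∫ b, log (r b).toReal ∂ν
      ≤ (Fintype.card ι : ℝ) * ∫ a, softmax (s a) i ∂Q - 1 := by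
  set n : ℝ := (Fintype.card ι : ℝ)
  set P := Q.withDensity fun a => r (T a)
  have hn : 0 < n := Nat.cast_pos.mpr Fintype.card_pos
  have : IsProbabilityMeasure (P.map T) := hPT ▸ inferInstance
  have : IsProbabilityMeasure P := Measure.isProbabilityMeasure_of_map T
  have hexp : ∀ a, exp (log n - -log (softmax (s a) i)) = n * softmax (s a) i := fun a => by
    rw [sub_neg_eq_add, exp_add, exp_log hn, exp_log (softmax_pos _ _)]
  rw [← hPT] at hL
  have hLT : ∫ a, log (r (T a)).toReal ∂P = ∫ b, log (r b).toReal ∂ν := by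
    rw [← hPT, integral_map hT.aemeasurable hL.aestronglyMeasurable]
  calc log n - ∫ a, -log (softmax (s a) i) ∂P - ∫ b, log (r b).toReal ∂ν
      = ∫ a, (log n - -log (softmax (s a) i)) ∂P - ∫ a, log (r (T a)).toReal ∂P := by
        rw [integral_sub (integrable_const _) hint, integral_const, probReal_univ, one_smul, hLT]
    _ ≤ ∫ a, exp (log n - -log (softmax (s a) i)) ∂Q - 1 :=
        integral_sub_integral_log_density_le_integral_exp_sub_one (ρ := fun a => r (T a))
          (hr.comp hT)
          (measurable_const.sub ((measurable_softmax i).comp hs).log.neg)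
          ((integrable_const (log n)).sub hint) (hL.comp_measurable hT)
          (by simpa only [hexp] using (integrable_softmax_comp hs i).const_mul n)
    _ = n * ∫ a, softmax (s a) i ∂Q - 1 := by simp_rw [hexp, integral_const_mul]

theorem log_card_sub_mean_integral_neg_log_softmax_le (hr : Measurable r) {T : ι → α → β}
    (hT : ∀ i, Measurable (T i)) {P : ι → Measure α}
    (hP : ∀ i, P i = Q.withDensity fun a => r (T i a)) (hPT : ∀ i, (P i).map (T i) = ν)
    (hs : Measurable s) (hint : ∀ i, Integrable (fun a => -log (softmax (s a) i)) (P i))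
    (hL : Integrable (fun b => log (r b).toReal) ν) :
    log (Fintype.card ι : ℝ)
        - (1 / (Fintype.card ι : ℝ)) * ∑ i, ∫ a, -log (softmax (s a) i) ∂(P i)
      ≤ ∫ b, log (r b).toReal ∂ν := by
  set n : ℝ := (Fintype.card ι : ℝ)
  have hn : 0 < n := Nat.cast_pos.mpr Fintype.card_pos
  have hbound := Finset.sum_le_sum fun i (_ : i ∈ Finset.univ) => by
    have := log_card_sub_integral_neg_log_softmax_le hr (hT i) (hP i ▸ hPT i) hs i
      (hP i ▸ hint i) hL
    rwa [← hP i] at this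
  have hsum : ∑ i, (n * ∫ a, softmax (s a) i ∂Q - 1) = 0 := by
    rw [Finset.sum_sub_distrib, ← Finset.mul_sum,
      ← integral_finsetSum _ fun i _ => integrable_softmax_comp hs i]
    simp [sum_softmax, n]
  rw [hsum, Finset.sum_sub_distrib, Finset.sum_sub_distrib, Finset.sum_const,
    Finset.sum_const, Finset.card_univ, nsmul_eq_mul, nsmul_eq_mul] at hbound
  calc log n - 1 / n * ∑ i, ∫ a, -log (softmax (s a) i) ∂(P i)
      = (n * log n - ∑ i, ∫ a, -log (softmax (s a) i) ∂(P i)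
          - n * ∫ b, log (r b).toReal ∂ν) / n + ∫ b, log (r b).toReal ∂ν := by
        field_simp; ring
    _ ≤ ∫ b, log (r b).toReal ∂ν := by
        linarith [div_nonpos_of_nonpos_of_nonneg hbound hn.le]

end NCE

section SoftNCE

variable {Ω 𝓧 𝒞 : Type*} [MeasurableSpace Ω] [MeasurableSpace 𝓧] [MeasurableSpace 𝒞]
  {μ : Measure Ω} {X : Ω → 𝓧} {C : Ω → 𝒞}

theorem map_Qmeas_eval [IsProbabilityMeasure μ] (hC : Measurable C) (N : ℕ) (i : Fin N) :
    (Qmeas μ X C N).map (fun p => (p.1, p.2 i)) = (μ.map X).prod (μ.map C) := by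
  have : IsProbabilityMeasure (μ.map C) := Measure.isProbabilityMeasure_map hC.aemeasurable
  calc (Qmeas μ X C N).map (fun p => (p.1, p.2 i))
      = ((μ.map X).prod (Measure.pi fun _ => μ.map C)).map (Prod.map id (Function.eval i)) := rfl
    _ = ((μ.map X).map id).prod ((Measure.pi fun _ => μ.map C).map (Function.eval i)) :=
      (Measure.map_prod_map _ _ measurable_id (measurable_pi_apply i)).symm
    _ = (μ.map X).prod (μ.map C) := by
      rw [Measure.map_id, (measurePreserving_eval (fun _ : Fin N => μ.map C) i).map_eq]

variable [MeasurableSingletonClass 𝒞]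

theorem map_prodMk_apply_prod_singleton [IsFiniteMeasure μ] (hX : Measurable X)
    (hC : Measurable C) (c : 𝒞) {A : Set 𝓧} (hA : MeasurableSet A) :
    μ.map (fun ω => (X ω, C ω)) (A ×ˢ {c}) = condLaw μ X C c A * μ (C ⁻¹' {c}) := by
  rw [Measure.map_apply (hX.prodMk hC) (hA.prod (measurableSet_singleton c)), condLaw,
    Measure.map_apply hX hA, cond_mul_eq_inter (hC (measurableSet_singleton c))]
  congr 1
  ext ω
  simp [and_comm]

theorem condLaw_eq_withDensity_rnDeriv [IsFiniteMeasure μ] (hX : Measurable X)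
    (hC : Measurable C) {c : 𝒞} (hc : μ (C ⁻¹' {c}) ≠ 0)
    (hac : μ.map (fun ω => (X ω, C ω)) ≪ (μ.map X).prod (μ.map C)) :
    condLaw μ X C c = (μ.map X).withDensity fun x =>
      (μ.map (fun ω => (X ω, C ω))).rnDeriv ((μ.map X).prod (μ.map C)) (x, c) := by
  set r := (μ.map (fun ω => (X ω, C ω))).rnDeriv ((μ.map X).prod (μ.map C))
  have hr : Measurable r := Measure.measurable_rnDeriv _ _
  ext A hA
  refine (ENNReal.mul_left_inj hc (measure_ne_top μ _)).mp ?_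
  rw [← map_prodMk_apply_prod_singleton hX hC c hA, ← Measure.withDensity_rnDeriv_eq _ _ hac,
    withDensity_apply _ (hA.prod (measurableSet_singleton c)),
    setLIntegral_prod _ hr.aemeasurable, withDensity_apply _ hA]
  simp only [lintegral_singleton, Measure.map_apply hC (measurableSet_singleton c)]
  exact lintegral_mul_const _ (hr.comp measurable_prodMk_right)

variable [Countable 𝒞] [IsProbabilityMeasure μ]

theorem Pmeas_eq_withDensity_rnDeriv (hX : Measurable X) (hC : Measurable C)
    (hpos : ∀ c, μ (C ⁻¹' {c}) ≠ 0)
    (hac : μ.map (fun ω => (X ω, C ω)) ≪ (μ.map X).prod (μ.map C)) (N : ℕ) (i : Fin N) :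
    Pmeas μ X C N i = (Qmeas μ X C N).withDensity fun p =>
      (μ.map (fun ω => (X ω, C ω))).rnDeriv ((μ.map X).prod (μ.map C)) (p.1, p.2 i) := by
  have hκ : (fun cs : Fin N → 𝒞 => (condLaw μ X C (cs i)).map (·, cs)) = fun cs =>
      ((μ.map X).withDensity fun x =>
        (μ.map (fun ω => (X ω, C ω))).rnDeriv ((μ.map X).prod (μ.map C)) (x, cs i)).map (·, cs) :=
    funext fun cs => by rw [condLaw_eq_withDensity_rnDeriv hX hC (hpos _) hac]
  rw [Pmeas, hκ, Qmeas]
  exact bind_map_prodMk_withDensity (g := fun p : 𝓧 × (Fin N → 𝒞) =>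
      (μ.map (fun ω => (X ω, C ω))).rnDeriv ((μ.map X).prod (μ.map C)) (p.1, p.2 i))
    ((Measure.measurable_rnDeriv _ _).comp (by fun_prop))

theorem map_Pmeas_eval (hX : Measurable X) (hC : Measurable C)
    (hpos : ∀ c, μ (C ⁻¹' {c}) ≠ 0)
    (hac : μ.map (fun ω => (X ω, C ω)) ≪ (μ.map X).prod (μ.map C)) (N : ℕ) (i : Fin N) :
    (Pmeas μ X C N i).map (fun p => (p.1, p.2 i)) = μ.map (fun ω => (X ω, C ω)) := by
  rw [Pmeas_eq_withDensity_rnDeriv hX hC hpos hac,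
    map_withDensity_comp_s5 (T := fun p : 𝓧 × (Fin N → 𝒞) => (p.1, p.2 i)) (by fun_prop)
      (Measure.measurable_rnDeriv _ _), map_Qmeas_eval hC,
    Measure.withDensity_rnDeriv_eq _ _ hac]

end SoftNCE

theorem stmt_5_general {Ω 𝓧 : Type*} [MeasurableSpace Ω] [MeasurableSpace 𝓧]
    {M dz : ℕ} (μ : Measure Ω) [IsProbabilityMeasure μ]
    (X : Ω → 𝓧) (C : Ω → Fin M) (hX : Measurable X) (hC : Measurable C)
    (hpos : ∀ c : Fin M, 0 < μ (C ⁻¹' {c}))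
    (N : ℕ) (hN : 1 ≤ N)
    (f : 𝓧 → EuclideanSpace ℝ (Fin dz)) (hf : Measurable f)
    (ψ : EuclideanSpace ℝ (Fin dz) → EuclideanSpace ℝ (Fin dz) → ℝ)
    (hψ : Measurable (fun p : EuclideanSpace ℝ (Fin dz) × EuclideanSpace ℝ (Fin dz) =>
      ψ p.1 p.2))
    (fbar : Fin M → EuclideanSpace ℝ (Fin dz))
    (hintP : ∀ i : Fin N, Integrable (fun p : 𝓧 × (Fin N → Fin M) =>
      -Real.log (Real.exp (ψ (f p.1) (fbar (p.2 i))) /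
        ∑ j : Fin N, Real.exp (ψ (f p.1) (fbar (p.2 j))))) (Pmeas μ X C N i)) :
    ((Real.log N
        - (1 / N) * ∑ i : Fin N, ∫ p, -Real.log (Real.exp (ψ (f p.1) (fbar (p.2 i))) /
            ∑ j : Fin N, Real.exp (ψ (f p.1) (fbar (p.2 j)))) ∂(Pmeas μ X C N i) : ℝ) : EReal)
      ≤ mutualInfo μ X C := by
  rw [mutualInfo, klDivergence]
  split_ifs with h
  · obtain ⟨hac, hL⟩ := h
    have hpos' : ∀ c, μ (C ⁻¹' {c}) ≠ 0 := fun c => (hpos c).ne'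
    have : NeZero N := ⟨by omega⟩
    have : IsProbabilityMeasure (μ.map fun ω => (X ω, C ω)) :=
      Measure.isProbabilityMeasure_map (hX.prodMk hC).aemeasurable
    have : IsProbabilityMeasure (Qmeas μ X C N) := by
      have := Measure.isProbabilityMeasure_map (μ := μ) hX.aemeasurable
      have := Measure.isProbabilityMeasure_map (μ := μ) hC.aemeasurable
      unfold Qmeas; infer_instance
    have hs : Measurable fun (p : 𝓧 × (Fin N → Fin M)) j => ψ (f p.1) (fbar (p.2 j)) :=
      measurable_pi_lambda _ fun j => hψ.comp ((hf.comp measurable_fst).prodMk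
        ((measurable_of_countable fbar).comp ((measurable_pi_apply j).comp measurable_snd)))
    have hbound := log_card_sub_mean_integral_neg_log_softmax_le (Q := Qmeas μ X C N)
      (Measure.measurable_rnDeriv _ _) (T := fun i p => (p.1, p.2 i)) (fun i => by fun_prop)
      (Pmeas_eq_withDensity_rnDeriv hX hC hpos' hac N) (map_Pmeas_eval hX hC hpos' hac N) hs
      hintP hL
    rw [Fintype.card_fin] at hbound
    exact EReal.coe_le_coe_iff.mpr hbound
  · exact le_top

/-- second item of Proposition 2: the SoftNCE loss, built from the
class-conditional mean embeddings `f̄(c) = E[f(X) | C = c]`, bounds mutual information as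
`I(X;C) ≥ log N − I_NCE^{soft}`. -/
theorem stmt_5 {Ω 𝓧 : Type*} [MeasurableSpace Ω] [MeasurableSpace 𝓧]
    {M dz : ℕ} (μ : Measure Ω) [IsProbabilityMeasure μ]
    (X : Ω → 𝓧) (C : Ω → Fin M) (hX : Measurable X) (hC : Measurable C)
    (hpos : ∀ c : Fin M, 0 < μ (C ⁻¹' {c}))
    (N : ℕ) (hN : 1 ≤ N)
    (f : 𝓧 → EuclideanSpace ℝ (Fin dz)) (hf : Measurable f)
    (hfbdd : ∃ R : ℝ, ∀ x, ‖f x‖ ≤ R)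
    (ψ : EuclideanSpace ℝ (Fin dz) → EuclideanSpace ℝ (Fin dz) → ℝ)
    (hψ : Measurable (fun p : EuclideanSpace ℝ (Fin dz) × EuclideanSpace ℝ (Fin dz) =>
      ψ p.1 p.2))
    (fbar : Fin M → EuclideanSpace ℝ (Fin dz))
    (hfbar : ∀ c, fbar c = ∫ x, f x ∂(condLaw μ X C c))
    (hintP : ∀ i : Fin N, Integrable (fun p : 𝓧 × (Fin N → Fin M) =>
      -Real.log (Real.exp (ψ (f p.1) (fbar (p.2 i))) /
        ∑ j : Fin N, Real.exp (ψ (f p.1) (fbar (p.2 j))))) (Pmeas μ X C N i)) :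
    ((Real.log N
        - (1 / N) * ∑ i : Fin N, ∫ p, -Real.log (Real.exp (ψ (f p.1) (fbar (p.2 i))) /
            ∑ j : Fin N, Real.exp (ψ (f p.1) (fbar (p.2 j)))) ∂(Pmeas μ X C N i) : ℝ) : EReal)
      ≤ mutualInfo μ X C :=
  stmt_5_general μ X C hX hC hpos N hN f hf ψ hψ fbar hintP
end

section
/- The contrastive loss L_N is invariant under adding to the score any function of x alone, and it is minimized by the log density ratio: (i) for every measurable α : 𝒳 → ℝ, L_N(s') = L_N(s) where s'(x, c) := s(x, c) + α(x); (ii) the score s*(x, c) := log( p(c|x) / p(c) ) satisfies L_N(s*) ≤ L_N(s) for every measurable score s with L_N(s) finite. (First item of Proposition 2: the optimal critic satisfies ψ* = log(p(c|x)/p(c)) + α(x) up to an arbitrary function α of x.) -/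
open MeasureTheory ProbabilityTheory Filter
open scoped Classical ENNReal Topology

/-- The `N`-sample contrastive loss
`L_N(s) := (1/N) Σ_i E_{P_i}[ −log( e^{s(X,C_i)} / Σ_j e^{s(X,C_j)} ) ]`. -/
noncomputable def contrastiveLoss {Ω 𝓧 : Type*} [MeasurableSpace Ω] [MeasurableSpace 𝓧]
    {M : ℕ} (μ : Measure Ω) (X : Ω → 𝓧) (C : Ω → Fin M) (N : ℕ)
    (s : 𝓧 → Fin M → ℝ) : ℝ :=
  (1 / N) * ∑ i : Fin N, ∫ p, -Real.log (Real.exp (s p.1 (p.2 i)) /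
    ∑ j : Fin N, Real.exp (s p.1 (p.2 j))) ∂(Pmeas μ X C N i)

/-!
Adding `α x` to every logit `s(x, C_j)` does not change the softmax, which gives (i). For (ii),
`P_i` has density `r(C_i, X)`, `r(c, x) := p(c|x) / p(c)`, with respect to
`Q = law(X) ⊗ law(C)^N`, so `N · L_N(s) = E_Q[∑ᵢ r(C_i, X) · (-log softmax(s(X, C_·))ᵢ)]`.
Pointwise, Gibbs' inequality says that this `r`-weighted cross-entropy is smallest for the
softmax equal to `r / ∑ r`, which is the softmax of `s* = log r`.
-/

open scoped NNReal

namespace Real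

variable {ι : Type*} [Fintype ι]

noncomputable def softmax (b : ι → ℝ) (i : ι) : ℝ := exp (b i) / ∑ j, exp (b j)

theorem softmax_add_const (b : ι → ℝ) (t : ℝ) (i : ι) :
    softmax (fun j => b j + t) i = softmax b i := by
  simp only [softmax, exp_add, ← Finset.sum_mul]
  exact mul_div_mul_right _ _ (exp_ne_zero t)

theorem softmax_pos [Nonempty ι] (b : ι → ℝ) (i : ι) : 0 < softmax b i :=
  div_pos (exp_pos _) (Finset.sum_pos (fun j _ => exp_pos (b j)) Finset.univ_nonempty)

theorem sum_softmax [Nonempty ι] (b : ι → ℝ) : ∑ i, softmax b i = 1 := by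
  simp only [softmax, ← Finset.sum_div]
  exact div_self (Finset.sum_pos (fun j _ => exp_pos (b j)) Finset.univ_nonempty).ne'

theorem softmax_log {a : ι → ℝ} (ha : ∀ i, 0 < a i) (i : ι) :
    softmax (fun j => log (a j)) i = a i / ∑ j, a j := by
  simp only [softmax, exp_log (ha _)]

theorem mul_log_div_le_sub {a q : ℝ} (ha : 0 < a) (hq : 0 < q) : a * log (q / a) ≤ q - a := by
  calc a * log (q / a) ≤ a * (q / a - 1) :=
        mul_le_mul_of_nonneg_left (log_le_sub_one_of_pos (div_pos hq ha)) ha.le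
    _ = q - a := by field_simp

/-- Gibbs' inequality, in cross-entropy form. -/
theorem sum_mul_neg_log_softmax_log_le {a : ι → ℝ} (ha : ∀ i, 0 < a i) (b : ι → ℝ) :
    ∑ i, a i * -log (softmax (fun j => log (a j)) i) ≤ ∑ i, a i * -log (softmax b i) := by
  rcases isEmpty_or_nonempty ι with hι | hι
  · simp
  set A := ∑ j, a j
  have hA : 0 < A := Finset.sum_pos (fun i _ => ha i) Finset.univ_nonempty
  have hterm : ∀ i, a i * -log (softmax b i) - a i * -log (a i / A)
      = -(a i * log (A * softmax b i / a i)) := by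
    intro i
    rw [mul_div_right_comm, log_mul (div_pos hA (ha i)).ne' (softmax_pos b i).ne',
      log_div hA.ne' (ha i).ne', log_div (ha i).ne' hA.ne']
    ring
  have hgibbs : ∑ i, a i * log (A * softmax b i / a i) ≤ 0 :=
    calc ∑ i, a i * log (A * softmax b i / a i) ≤ ∑ i, (A * softmax b i - a i) :=
          Finset.sum_le_sum fun i _ => mul_log_div_le_sub (ha i) (mul_pos hA (softmax_pos b i))
      _ = 0 := by rw [Finset.sum_sub_distrib, ← Finset.mul_sum, sum_softmax, mul_one, sub_self]
  have hdiff : ∑ i, a i * -log (softmax b i) - ∑ i, a i * -log (a i / A)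
      = -∑ i, a i * log (A * softmax b i / a i) := by
    rw [← Finset.sum_sub_distrib, ← Finset.sum_neg_distrib]
    exact Finset.sum_congr rfl fun i _ => hterm i
  simp only [softmax_log ha]
  linarith

end Real

section Densities

variable {Ω 𝓧 𝒞 : Type*} [MeasurableSpace Ω] [MeasurableSpace 𝓧] [MeasurableSpace 𝒞]
  {μ : Measure Ω} {X : Ω → 𝓧} {C : Ω → 𝒞}

theorem condLaw_eq_withDensity [IsFiniteMeasure μ] [MeasurableSingletonClass 𝒞]
    (hX : Measurable X) (hC : Measurable C) {c : 𝒞} (hc : 0 < μ (C ⁻¹' {c}))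
    {q : 𝓧 → ℝ} (hq : Measurable q) (hq_nonneg : 0 ≤ᵐ[μ.map X] q)
    (hq_version : ∀ A : Set 𝓧, MeasurableSet A →
      ∫ x in A, q x ∂(μ.map X) = (μ (X ⁻¹' A ∩ C ⁻¹' {c})).toReal) :
    condLaw μ X C c =
      (μ.map X).withDensity fun x => ENNReal.ofReal (q x / (μ (C ⁻¹' {c})).toReal) := by
  have hCc : MeasurableSet (C ⁻¹' {c}) := hC (measurableSet_singleton c)
  have hpc : 0 < (μ (C ⁻¹' {c})).toReal := ENNReal.toReal_pos hc.ne' (measure_ne_top μ _)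
  have hq_int : Integrable q (μ.map X) := by
    refine Integrable.of_integral_ne_zero ?_
    rw [← setIntegral_univ, hq_version _ MeasurableSet.univ, Set.preimage_univ, Set.univ_inter]
    exact hpc.ne'
  ext A hA
  have hq_lintegral : ∫⁻ x in A, ENNReal.ofReal (q x) ∂(μ.map X) = μ (X ⁻¹' A ∩ C ⁻¹' {c}) := by
    rw [← ofReal_integral_eq_lintegral_ofReal hq_int.integrableOn (ae_restrict_of_ae hq_nonneg),
      hq_version A hA, ENNReal.ofReal_toReal (measure_ne_top μ _)]
  simp_rw [condLaw, Measure.map_apply hX hA, cond_apply hCc, withDensity_apply _ hA,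
    div_eq_mul_inv, ENNReal.ofReal_mul' (inv_nonneg.2 hpc.le)]
  rw [lintegral_mul_const _ hq.ennreal_ofReal, hq_lintegral, ENNReal.ofReal_inv_of_pos hpc,
    ENNReal.ofReal_toReal (measure_ne_top μ _), Set.inter_comm, mul_comm]

theorem measurable_density_comp_eval {β : Type*} [MeasurableSpace β] [Countable 𝒞]
    [MeasurableSingletonClass 𝒞] {f : 𝒞 → 𝓧 → β} (hf : ∀ c, Measurable (f c)) {N : ℕ}
    (i : Fin N) : Measurable fun p : 𝓧 × (Fin N → 𝒞) => f (p.2 i) p.1 :=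
  (measurable_from_prod_countable_left (f := fun q : 𝓧 × 𝒞 => f q.2 q.1) hf).comp
    (measurable_fst.prodMk ((measurable_pi_apply i).comp measurable_snd))

theorem Pmeas_eq_withDensity [IsFiniteMeasure μ] [Countable 𝒞] [MeasurableSingletonClass 𝒞]
    {f : 𝒞 → 𝓧 → ℝ≥0} (hf : ∀ c, Measurable (f c))
    (hcond : ∀ c, condLaw μ X C c = (μ.map X).withDensity fun x => f c x) (N : ℕ) (i : Fin N) :
    Pmeas μ X C N i = (Qmeas μ X C N).withDensity fun p => f (p.2 i) p.1 := by
  ext S hS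
  rw [Pmeas, Measure.bind_apply hS (measurable_of_countable _).aemeasurable, Qmeas,
    withDensity_apply _ hS, ← lintegral_indicator hS, lintegral_prod_symm _
      ((measurable_density_comp_eval hf i).coe_nnreal_ennreal.indicator hS).aemeasurable]
  refine lintegral_congr fun cs => ?_
  rw [Measure.map_apply measurable_prodMk_right hS, hcond, withDensity_apply _
    (measurable_prodMk_right hS), ← lintegral_indicator (measurable_prodMk_right hS)]
  rfl

end Densities

theorem sum_integral_withDensity_le_of_ae_le {α ι : Type*} [MeasurableSpace α] [Fintype ι]
    {Q : Measure α} {w : ι → α → ℝ≥0} (hw : ∀ i, Measurable (w i)) {F G : ι → α → ℝ}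
    (hF : ∀ i, Integrable (F i) (Q.withDensity fun a => w i a))
    (hG : ∀ i, Integrable (G i) (Q.withDensity fun a => w i a))
    (hle : ∀ᵐ a ∂Q, ∑ i, w i a • F i a ≤ ∑ i, w i a • G i a) :
    ∑ i, ∫ a, F i a ∂(Q.withDensity fun a => w i a)
      ≤ ∑ i, ∫ a, G i a ∂(Q.withDensity fun a => w i a) := by
  have hF' := fun i => (integrable_withDensity_iff_integrable_smul (hw i)).1 (hF i)
  have hG' := fun i => (integrable_withDensity_iff_integrable_smul (hw i)).1 (hG i)
  simp only [integral_withDensity_eq_integral_smul (hw _)]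
  rw [← integral_finsetSum _ fun i _ => hF' i, ← integral_finsetSum _ fun i _ => hG' i]
  exact integral_mono_ae (integrable_finsetSum _ fun i _ => hF' i)
    (integrable_finsetSum _ fun i _ => hG' i) hle

theorem contrastiveLoss_eq_sum_integral_softmax {Ω 𝓧 : Type*} [MeasurableSpace Ω]
    [MeasurableSpace 𝓧] {M : ℕ} (μ : Measure Ω) (X : Ω → 𝓧) (C : Ω → Fin M) (N : ℕ)
    (s : 𝓧 → Fin M → ℝ) :
    contrastiveLoss μ X C N s = (1 / N) * ∑ i : Fin N,
      ∫ p, -Real.log (Real.softmax (fun j => s p.1 (p.2 j)) i) ∂(Pmeas μ X C N i) :=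
  rfl

theorem stmt_6_general {Ω 𝓧 : Type*} [MeasurableSpace Ω] [MeasurableSpace 𝓧]
    {M : ℕ} (μ : Measure Ω) [IsProbabilityMeasure μ]
    (X : Ω → 𝓧) (C : Ω → Fin M) (hX : Measurable X) (hC : Measurable C)
    (hpos : ∀ c : Fin M, 0 < μ (C ⁻¹' {c}))
    (N : ℕ)
    -- `pc c` is a fixed measurable version of the conditional probability `P(C = c | X = x)`
    (pc : Fin M → 𝓧 → ℝ) (hpcmeas : ∀ c, Measurable (pc c))
    (hpcver : ∀ c, ∀ A : Set 𝓧, MeasurableSet A →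
      ∫ x in A, pc c x ∂(μ.map X) = (μ (X ⁻¹' A ∩ C ⁻¹' {c})).toReal)
    (hpcpos : ∀ c, ∀ᵐ x ∂(μ.map X), 0 < pc c x)
    -- finiteness of `L_N(s*)`
    (hstar : ∀ i : Fin N, Integrable (fun p : 𝓧 × (Fin N → Fin M) =>
      -Real.log (Real.exp (Real.log (pc (p.2 i) p.1 / (μ (C ⁻¹' {p.2 i})).toReal)) /
        ∑ j : Fin N, Real.exp (Real.log (pc (p.2 j) p.1 / (μ (C ⁻¹' {p.2 j})).toReal))))
      (Pmeas μ X C N i)) :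
    -- (i) invariance under adding any measurable function of `x` alone
    (∀ (s : 𝓧 → Fin M → ℝ) (α : 𝓧 → ℝ),
      Measurable (fun p : 𝓧 × Fin M => s p.1 p.2) → Measurable α →
      contrastiveLoss μ X C N (fun x c => s x c + α x) = contrastiveLoss μ X C N s)
    ∧
    -- (ii) the score `s*(x,c) = log(p(c|x)/p(c))` minimizes `L_N`
    (∀ s : 𝓧 → Fin M → ℝ, Measurable (fun p : 𝓧 × Fin M => s p.1 p.2) →
      (∀ i : Fin N, Integrable (fun p : 𝓧 × (Fin N → Fin M) =>
        -Real.log (Real.exp (s p.1 (p.2 i)) / ∑ j : Fin N, Real.exp (s p.1 (p.2 j))))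
        (Pmeas μ X C N i)) →
      contrastiveLoss μ X C N
          (fun x c => Real.log (pc c x / (μ (C ⁻¹' {c})).toReal))
        ≤ contrastiveLoss μ X C N s) := by
  simp only [contrastiveLoss_eq_sum_integral_softmax]
  refine ⟨fun s α _ _ => by simp only [Real.softmax_add_const], fun s _ hs => ?_⟩
  have hratio_meas : ∀ c, Measurable fun x => (pc c x / (μ (C ⁻¹' {c})).toReal).toNNReal :=
    fun c => ((hpcmeas c).div_const _).real_toNNReal
  have hPQ := Pmeas_eq_withDensity hratio_meas
    (fun c => condLaw_eq_withDensity hX hC (hpos c) (hpcmeas c)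
      ((hpcpos c).mono fun x hx => hx.le) (hpcver c)) N
  simp only [hPQ] at hstar hs ⊢
  refine mul_le_mul_of_nonneg_left (sum_integral_withDensity_le_of_ae_le
    (measurable_density_comp_eval (N := N) hratio_meas) hstar hs ?_) (by positivity)
  have hratio_pos : ∀ᵐ x ∂(μ.map X), ∀ c, 0 < pc c x / (μ (C ⁻¹' {c})).toReal := by
    filter_upwards [ae_all_iff.2 hpcpos] with x hx c
    exact div_pos (hx c) (ENNReal.toReal_pos (hpos c).ne' (measure_ne_top μ _))
  filter_upwards [Measure.quasiMeasurePreserving_fst.ae hratio_pos] with p hp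
  simpa only [NNReal.smul_def, smul_eq_mul, Real.coe_toNNReal _ (hp _).le] using
    Real.sum_mul_neg_log_softmax_log_le (fun i => hp (p.2 i)) fun i => s p.1 (p.2 i)

/-- first item of Proposition 2: the contrastive loss `L_N` is invariant
under adding to the score any function of `x` alone, and it is minimized by the log density
ratio `s*(x,c) = log(p(c|x)/p(c))`. -/
theorem stmt_6 {Ω 𝓧 : Type*} [MeasurableSpace Ω] [MeasurableSpace 𝓧]
    {M : ℕ} (μ : Measure Ω) [IsProbabilityMeasure μ]
    (X : Ω → 𝓧) (C : Ω → Fin M) (hX : Measurable X) (hC : Measurable C)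
    (hpos : ∀ c : Fin M, 0 < μ (C ⁻¹' {c}))
    (N : ℕ) (hN : 1 ≤ N)
    -- `pc c` is a fixed measurable version of the conditional probability `P(C = c | X = x)`
    (pc : Fin M → 𝓧 → ℝ) (hpcmeas : ∀ c, Measurable (pc c))
    (hpcver : ∀ c, ∀ A : Set 𝓧, MeasurableSet A →
      ∫ x in A, pc c x ∂(μ.map X) = (μ (X ⁻¹' A ∩ C ⁻¹' {c})).toReal)
    (hpcpos : ∀ c, ∀ᵐ x ∂(μ.map X), 0 < pc c x)
    -- finiteness of `L_N(s*)`
    (hstar : ∀ i : Fin N, Integrable (fun p : 𝓧 × (Fin N → Fin M) =>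
      -Real.log (Real.exp (Real.log (pc (p.2 i) p.1 / (μ (C ⁻¹' {p.2 i})).toReal)) /
        ∑ j : Fin N, Real.exp (Real.log (pc (p.2 j) p.1 / (μ (C ⁻¹' {p.2 j})).toReal))))
      (Pmeas μ X C N i)) :
    -- (i) invariance under adding any measurable function of `x` alone
    (∀ (s : 𝓧 → Fin M → ℝ) (α : 𝓧 → ℝ),
      Measurable (fun p : 𝓧 × Fin M => s p.1 p.2) → Measurable α →
      contrastiveLoss μ X C N (fun x c => s x c + α x) = contrastiveLoss μ X C N s)
    ∧
    -- (ii) the score `s*(x,c) = log(p(c|x)/p(c))` minimizes `L_N`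
    (∀ s : 𝓧 → Fin M → ℝ, Measurable (fun p : 𝓧 × Fin M => s p.1 p.2) →
      (∀ i : Fin N, Integrable (fun p : 𝓧 × (Fin N → Fin M) =>
        -Real.log (Real.exp (s p.1 (p.2 i)) / ∑ j : Fin N, Real.exp (s p.1 (p.2 j))))
        (Pmeas μ X C N i)) →
      contrastiveLoss μ X C N
          (fun x c => Real.log (pc c x / (μ (C ⁻¹' {c})).toReal))
        ≤ contrastiveLoss μ X C N s) :=
  stmt_6_general μ X C hX hC hpos N pc hpcmeas hpcver hpcpos hstar
end

section
/- Under the boundedness assumption on the density ratio, the expected logarithm of the self-normalizing denominator vanishes in the limit: lim_{N→∞} E[ log( (1/N) ( p(C|X)/p(C) + Σ_{j=2}^N p(C_j|X)/p(C_j) ) ) ] = 0. -/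
/-!
For fixed `x`, the weights `w c = p(c|x) / p(c)` lie in `[ε, B]` and have mean one under the
law of `C`, so the self-normalizing denominator `T` is an empirical mean of i.i.d. weights
(plus one extra term) with `E T - 1 = O(1/N)` and `Var T = O(1/N)`. Since
`|log t - (t - 1)| ≤ (t - 1)² / ε` for `t ≥ ε`, this gives
`|E log T| ≤ |E T - 1| + E (T - 1)² / ε = O(1/N)` uniformly in `x`, and Fubini over the law
of `(X, C)` finishes the proof.
-/

open MeasureTheory ProbabilityTheory Filter Set Real
open scoped Topology

lemma abs_log_sub_sub_one_le {ε t : ℝ} (hε : 0 < ε) (ht : ε ≤ t) :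
    |log t - (t - 1)| ≤ (t - 1) ^ 2 / ε := by
  have htpos : 0 < t := hε.trans_le ht
  have hgap : t - 1 - (1 - t⁻¹) = (t - 1) ^ 2 / t := by field_simp
  rw [abs_le]
  constructor
  · have : (t - 1) ^ 2 / t ≤ (t - 1) ^ 2 / ε := by gcongr
    linarith [one_sub_inv_le_log_of_pos htpos]
  · have : 0 ≤ (t - 1) ^ 2 / ε := by positivity
    linarith [log_le_sub_one_of_pos htpos]

lemma abs_integral_log_le {Ω : Type*} [MeasurableSpace Ω] {P : Measure Ω}
    [IsProbabilityMeasure P] {T : Ω → ℝ} (hT : MemLp T 2 P) {ε : ℝ} (hε : 0 < ε)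
    (hTε : ∀ᵐ ω ∂P, ε ≤ T ω) :
    |∫ ω, log (T ω) ∂P| ≤ |P[T] - 1| + (Var[T; P] + (P[T] - 1) ^ 2) / ε := by
  have hT1 : Integrable T P := hT.integrable one_le_two
  have hT1' : Integrable (fun ω => T ω - 1) P := hT1.sub (integrable_const 1)
  have hT' : MemLp (fun ω => T ω - 1) 2 P := hT.sub (memLp_const 1)
  have hsq : Integrable (fun ω => (T ω - 1) ^ 2) P := hT'.integrable_sq
  have hsecond : ∫ ω, (T ω - 1) ^ 2 ∂P = Var[T; P] + (P[T] - 1) ^ 2 := by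
    rw [← variance_sub_const hT.aestronglyMeasurable 1, variance_eq_sub hT',
      integral_sub hT1 (integrable_const 1)]
    simp
  have hrem : ∀ᵐ ω ∂P, ‖log (T ω) - (T ω - 1)‖ ≤ (T ω - 1) ^ 2 / ε := by
    filter_upwards [hTε] with ω hω using abs_log_sub_sub_one_le hε hω
  have hremint : Integrable (fun ω => log (T ω) - (T ω - 1)) P :=
    (hsq.div_const ε).mono' ((measurable_log.comp_aemeasurable hT.aemeasurable).sub
      (hT.aemeasurable.sub_const 1)).aestronglyMeasurable hrem
  have hsplit : ∫ ω, log (T ω) ∂P = ∫ ω, (log (T ω) - (T ω - 1)) ∂P + (P[T] - 1) := by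
    have hmean : P[T] - 1 = ∫ ω, (T ω - 1) ∂P := by
      rw [integral_sub hT1 (integrable_const 1)]
      simp
    rw [hmean, ← integral_add hremint hT1']
    simp
  calc |∫ ω, log (T ω) ∂P|
      ≤ |∫ ω, (log (T ω) - (T ω - 1)) ∂P| + |P[T] - 1| := hsplit ▸ abs_add_le _ _
    _ ≤ ∫ ω, (T ω - 1) ^ 2 / ε ∂P + |P[T] - 1| := by
        gcongr
        exact norm_integral_le_of_norm_le (hsq.div_const ε) hrem
    _ = |P[T] - 1| + (Var[T; P] + (P[T] - 1) ^ 2) / ε := by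
        rw [integral_div, hsecond, add_comm]

lemma one_div_mul_add_sum_mem_Icc {n : ℕ} {ε B a : ℝ} {b : Fin n → ℝ} (ha : a ∈ Icc ε B)
    (hb : ∀ j, b j ∈ Icc ε B) : 1 / ((n : ℝ) + 1) * (a + ∑ j, b j) ∈ Icc ε B := by
  have hlow : n * ε ≤ ∑ j, b j := by
    simpa using Finset.card_nsmul_le_sum Finset.univ b ε fun j _ => (hb j).1
  have hupp : ∑ j, b j ≤ n * B := by
    simpa using Finset.sum_le_card_nsmul Finset.univ b B fun j _ => (hb j).2
  rw [one_div_mul_eq_div, mem_Icc, le_div_iff₀ (by positivity), div_le_iff₀ (by positivity)]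
  constructor <;> linarith [ha.1, ha.2]

section EmpiricalMean

variable {α : Type*} [MeasurableSpace α] {ν : Measure α} [IsProbabilityMeasure ν] {g : α → ℝ}

lemma integral_mem_Icc_of_forall_mem (hgint : Integrable g ν) {a b : ℝ}
    (hg : ∀ x, g x ∈ Icc a b) : ∫ x, g x ∂ν ∈ Icc a b :=
  ⟨by simpa using integral_mono (integrable_const a) hgint fun x => (hg x).1,
    by simpa using integral_mono hgint (integrable_const b) fun x => (hg x).2⟩

lemma integral_sum_comp_eval_pi {ι : Type*} [Fintype ι] (hg : Integrable g ν) :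
    ∫ ω : ι → α, ∑ j, g (ω j) ∂Measure.pi (fun _ => ν) = Fintype.card ι * ∫ x, g x ∂ν := by
  rw [integral_finsetSum _ fun j _ => integrable_comp_eval hg]
  simp [integral_comp_eval (μ := fun _ => ν) hg.aestronglyMeasurable]

lemma integral_one_div_mul_add_sum_pi (hg : Integrable g ν) (a : ℝ) (n : ℕ) :
    ∫ ω : Fin n → α, 1 / ((n : ℝ) + 1) * (a + ∑ j, g (ω j)) ∂Measure.pi (fun _ => ν)
      = (a + n * ∫ x, g x ∂ν) / (n + 1) := by
  rw [integral_const_mul, integral_add (integrable_const a)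
    (integrable_finsetSum _ fun j _ => integrable_comp_eval hg), integral_sum_comp_eval_pi hg]
  simp [div_eq_inv_mul]

lemma variance_one_div_mul_add_sum_pi (hg : MemLp g 2 ν) (a : ℝ) (n : ℕ) :
    Var[fun ω : Fin n → α => 1 / ((n : ℝ) + 1) * (a + ∑ j, g (ω j)); Measure.pi fun _ => ν]
      = n * Var[g; ν] / (n + 1) ^ 2 := by
  have hSm : AEStronglyMeasurable (fun ω : Fin n → α => ∑ j, g (ω j)) (Measure.pi fun _ => ν) :=
    Finset.aestronglyMeasurable_fun_sum _ fun j _ =>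
      (integrable_comp_eval (hg.integrable one_le_two)).aestronglyMeasurable
  rw [variance_const_mul, variance_const_add hSm, ← Finset.sum_fn, variance_sum_pi fun _ => hg]
  simp [div_eq_inv_mul]

lemma abs_integral_log_empirical_mean_le (hgm : Measurable g) {ε B : ℝ} (hε : 0 < ε)
    (hg : ∀ x, g x ∈ Icc ε B) (hmean : ∫ x, g x ∂ν = 1) {a : ℝ} (ha : a ∈ Icc ε B) (n : ℕ) :
    |∫ ω : Fin n → α, log (1 / ((n : ℝ) + 1) * (a + ∑ j, g (ω j))) ∂Measure.pi fun _ => ν|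
      ≤ (B - ε + (B - ε) ^ 2 / ε) / (n + 1) := by
  have hg2 : MemLp g 2 ν := memLp_of_bounded (ae_of_all _ hg) hgm.aestronglyMeasurable 2
  have hone : (1 : ℝ) ∈ Icc ε B :=
    hmean ▸ integral_mem_Icc_of_forall_mem (hg2.integrable one_le_two) hg
  have hVarg : Var[g; ν] ≤ (B - ε) ^ 2 :=
    (variance_le_sq_of_bounded (ae_of_all _ hg) hgm.aemeasurable).trans
      (by nlinarith [hone.1, hone.2])
  have hD : |a - 1| ≤ B - ε :=
    abs_sub_le_iff.2 ⟨by linarith [ha.2, hone.1], by linarith [ha.1, hone.2]⟩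
  have hTbound : ∀ ω : Fin n → α, 1 / ((n : ℝ) + 1) * (a + ∑ j, g (ω j)) ∈ Icc ε B := fun ω =>
    one_div_mul_add_sum_mem_Icc ha fun j => hg (ω j)
  have hTm : Measurable fun ω : Fin n → α => 1 / ((n : ℝ) + 1) * (a + ∑ j, g (ω j)) :=
    ((Finset.measurable_sum _ fun j _ => hgm.comp (measurable_pi_apply j)).const_add a).const_mul _
  have key := abs_integral_log_le
    (memLp_of_bounded (μ := Measure.pi fun _ => ν) (ae_of_all _ hTbound) hTm.aestronglyMeasurable 2)
    hε (ae_of_all _ fun ω => (hTbound ω).1)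
  have hbias : (a + n * 1) / ((n : ℝ) + 1) - 1 = (a - 1) / (n + 1) := by
    field_simp
    ring
  rw [integral_one_div_mul_add_sum_pi (hg2.integrable one_le_two), hmean,
    variance_one_div_mul_add_sum_pi hg2, hbias, abs_div,
    abs_of_pos (by positivity : (0 : ℝ) < n + 1), div_pow] at key
  calc _ ≤ _ := key
    _ ≤ (B - ε) / (n + 1)
          + (n * (B - ε) ^ 2 / (n + 1) ^ 2 + (B - ε) ^ 2 / (n + 1) ^ 2) / ε := by
        gcongr ?_ / _ + (_ * ?_ / _ + ?_ / _) / _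
        exact sq_le_sq.2 (hD.trans (le_abs_self _))
    _ = (B - ε + (B - ε) ^ 2 / ε) / (n + 1) := by
        field_simp

end EmpiricalMean

lemma abs_integral_log_self_normalized_le {α β : Type*} [MeasurableSpace α] [MeasurableSpace β]
    {ρ : Measure (α × β)} [IsProbabilityMeasure ρ] {ν : Measure β} [IsProbabilityMeasure ν]
    {w : α → β → ℝ} (hw : Measurable (Function.uncurry w)) {ε B : ℝ} (hε : 0 < ε)
    (hwb : ∀ᵐ z ∂ρ, (∀ c, w z.1 c ∈ Icc ε B) ∧ ∫ c, w z.1 c ∂ν = 1) (n : ℕ) :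
    |∫ z, log (1 / ((n : ℝ) + 1) * (w z.1.1 z.1.2 + ∑ j, w z.1.1 (z.2 j)))
        ∂ρ.prod (Measure.pi fun _ : Fin n => ν)| ≤ (B - ε + (B - ε) ^ 2 / ε) / (n + 1) := by
  set F := fun z : (α × β) × (Fin n → β) =>
    log (1 / ((n : ℝ) + 1) * (w z.1.1 z.1.2 + ∑ j, w z.1.1 (z.2 j)))
  have hFm : Measurable F := by
    have hwj : ∀ j, Measurable fun z : (α × β) × (Fin n → β) => w z.1.1 (z.2 j) := fun j =>
      hw.comp (f := fun z : (α × β) × (Fin n → β) => (z.1.1, z.2 j)) (by fun_prop)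
    exact measurable_log.comp (((hw.comp measurable_fst).add
      (Finset.measurable_sum _ fun j _ => hwj j)).const_mul _)
  have hFb : ∀ᵐ z ∂ρ.prod (Measure.pi fun _ : Fin n => ν), ‖F z‖ ≤ max |log ε| |log B| := by
    filter_upwards [Measure.quasiMeasurePreserving_fst.ae hwb] with z hz
    have hmem := one_div_mul_add_sum_mem_Icc (hz.1 z.1.2) fun j => hz.1 (z.2 j)
    exact abs_le_max_abs_abs (log_le_log hε hmem.1) (log_le_log (hε.trans_le hmem.1) hmem.2)
  rw [integral_prod F ((integrable_const _).mono' hFm.aestronglyMeasurable hFb)]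
  have hinner : ∀ᵐ z ∂ρ, ‖∫ ω, F (z, ω) ∂Measure.pi fun _ : Fin n => ν‖
      ≤ (B - ε + (B - ε) ^ 2 / ε) / (n + 1) := by
    filter_upwards [hwb] with z hz
    exact abs_integral_log_empirical_mean_le (hw.comp measurable_prodMk_left) hε hz.1 hz.2
      (hz.1 z.2) n
  simpa using norm_integral_le_of_norm_le_const hinner

section ConditionalProbability

variable {Ω ι : Type*} [MeasurableSpace Ω] [Fintype ι] {μ : Measure Ω} {C : Ω → ι}

lemma ae_sum_eq_one_of_forall_setIntegral_eq {𝓧 : Type*} [MeasurableSpace 𝓧]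
    [MeasurableSpace ι] [MeasurableSingletonClass ι] [IsFiniteMeasure μ] {X : Ω → 𝓧}
    (hX : Measurable X) (hC : Measurable C) {pc : ι → 𝓧 → ℝ} (hint : ∀ c, Integrable (pc c) (μ.map X))
    (hpc : ∀ c, ∀ A : Set 𝓧, MeasurableSet A →
      ∫ x in A, pc c x ∂(μ.map X) = (μ (X ⁻¹' A ∩ C ⁻¹' {c})).toReal) :
    ∀ᵐ x ∂μ.map X, ∑ c, pc c x = 1 := by
  refine ae_eq_of_forall_setIntegral_eq_of_sigmaFinite
    (fun _ _ _ => (integrable_finsetSum _ fun c _ => hint c).integrableOn)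
    (fun _ _ _ => (integrable_const 1).integrableOn) fun A hA _ => ?_
  rw [integral_finsetSum _ fun c _ => (hint c).integrableOn, setIntegral_const, smul_eq_mul,
    mul_one, map_measureReal_apply hX hA]
  simp only [hpc _ A hA]
  calc ∑ c, (μ (X ⁻¹' A ∩ C ⁻¹' {c})).toReal
      = ∑ c, (μ.restrict (X ⁻¹' A)).real (C ⁻¹' {c}) := by
        simp only [measureReal_def, Measure.restrict_apply (hC (measurableSet_singleton _)),
          inter_comm]
    _ = μ.real (X ⁻¹' A) := by
        rw [sum_measureReal_preimage_singleton _ fun c _ => hC (measurableSet_singleton c)]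
        simp

lemma integral_map_div_measure_preimage_singleton [MeasurableSpace ι]
    [MeasurableSingletonClass ι] [IsFiniteMeasure μ] (hC : Measurable C)
    (hpos : ∀ c, 0 < μ (C ⁻¹' {c})) (f : ι → ℝ) :
    ∫ c, f c / (μ (C ⁻¹' {c})).toReal ∂μ.map C = ∑ c, f c := by
  rw [integral_fintype .of_finite]
  refine Finset.sum_congr rfl fun c _ => ?_
  rw [map_measureReal_apply hC (measurableSet_singleton c), measureReal_def, smul_eq_mul,
    mul_div_cancel₀ _ (ENNReal.toReal_pos (hpos c).ne' (measure_ne_top μ _)).ne']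

lemma div_measure_preimage_singleton_mem_Icc [IsProbabilityMeasure μ]
    (hpos : ∀ c, 0 < μ (C ⁻¹' {c})) {q : ι → ℝ} {ε : ℝ} (hε : 0 ≤ ε) (hq : ∀ c, ε ≤ q c)
    (hsum : ∑ c, q c = 1) (c : ι) :
    q c / (μ (C ⁻¹' {c})).toReal ∈ Icc ε (∑ c, ((μ (C ⁻¹' {c})).toReal)⁻¹) := by
  have hp : ∀ c, 0 < (μ (C ⁻¹' {c})).toReal := fun c =>
    ENNReal.toReal_pos (hpos c).ne' (measure_ne_top μ _)
  refine ⟨(hq c).trans (le_div_self (hε.trans (hq c)) (hp c) measureReal_le_one), ?_⟩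
  calc q c / (μ (C ⁻¹' {c})).toReal ≤ 1 / (μ (C ⁻¹' {c})).toReal := by
        gcongr
        exact hsum ▸ Finset.single_le_sum (fun c' _ => hε.trans (hq c')) (Finset.mem_univ c)
    _ ≤ ∑ c, ((μ (C ⁻¹' {c})).toReal)⁻¹ := by
        rw [one_div]
        exact Finset.single_le_sum (fun c' _ => (inv_pos.2 (hp c')).le) (Finset.mem_univ c)

end ConditionalProbability

/-- key step in the proof of the third item of Proposition 2:
under the boundedness assumption on the density ratio, the expected logarithm of the
self-normalizing denominator vanishes in the limit:
`lim_{N→∞} E[ log( (1/N)( p(C|X)/p(C) + Σ_{j=2}^N p(C_j|X)/p(C_j) ) ) ] = 0`,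
where `C_2, C_3, …` are i.i.d. copies of `C` independent of `(X, C)`. -/
theorem stmt_8 {Ω 𝓧 : Type*} [MeasurableSpace Ω] [MeasurableSpace 𝓧]
    {M : ℕ} (μ : Measure Ω) [IsProbabilityMeasure μ]
    (X : Ω → 𝓧) (C : Ω → Fin M) (hX : Measurable X) (hC : Measurable C)
    (hpos : ∀ c : Fin M, 0 < μ (C ⁻¹' {c}))
    -- `pc c` is a fixed measurable version of the conditional probability `P(C = c | X = x)`
    (pc : Fin M → 𝓧 → ℝ) (hpcmeas : ∀ c, Measurable (pc c))
    (hpcver : ∀ c, ∀ A : Set 𝓧, MeasurableSet A →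
      ∫ x in A, pc c x ∂(μ.map X) = (μ (X ⁻¹' A ∩ C ⁻¹' {c})).toReal)
    (hpceps : ∃ ε : ℝ, 0 < ε ∧ ∀ c, ∀ᵐ x ∂(μ.map X), ε ≤ pc c x) :
    Tendsto (fun N : ℕ =>
        ∫ z, Real.log ((1 / N) *
            (pc z.1.2 z.1.1 / (μ (C ⁻¹' {z.1.2})).toReal +
              ∑ j : Fin (N - 1), pc (z.2 j) z.1.1 / (μ (C ⁻¹' {z.2 j})).toReal))
          ∂((μ.map (fun ω => (X ω, C ω))).prod (Measure.pi fun _ : Fin (N - 1) => μ.map C)))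
      atTop (𝓝 0) := by
  obtain ⟨ε, hε, hεpc⟩ := hpceps
  have hint : ∀ c, Integrable (pc c) (μ.map X) := fun c => by
    have hmass := hpcver c univ .univ
    rw [Measure.restrict_univ, preimage_univ, univ_inter] at hmass
    exact .of_integral_ne_zero
      (hmass ▸ (ENNReal.toReal_pos (hpos c).ne' (measure_ne_top μ _)).ne')
  have hgood : ∀ᵐ x ∂μ.map X, (∀ c, ε ≤ pc c x) ∧ ∑ c, pc c x = 1 :=
    (ae_all_iff.2 hεpc).and (ae_sum_eq_one_of_forall_setIntegral_eq hX hC hint hpcver)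
  rw [← Measure.fst_map_prodMk hC] at hgood
  set B := ∑ c, ((μ (C ⁻¹' {c})).toReal)⁻¹
  have hratio : ∀ᵐ z ∂μ.map (fun ω => (X ω, C ω)),
      (∀ c, pc c z.1 / (μ (C ⁻¹' {c})).toReal ∈ Icc ε B) ∧
        ∫ c, pc c z.1 / (μ (C ⁻¹' {c})).toReal ∂μ.map C = 1 := by
    filter_upwards [ae_of_ae_map measurable_fst.aemeasurable hgood] with z ⟨hlow, hsum⟩
    exact ⟨div_measure_preimage_singleton_mem_Icc hpos hε.le hlow hsum,
      by rw [integral_map_div_measure_preimage_singleton hC hpos, hsum]⟩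
  have hw : Measurable (Function.uncurry fun x c => pc c x / (μ (C ⁻¹' {c})).toReal) :=
    measurable_from_prod_countable_left fun c => (hpcmeas c).div_const (μ (C ⁻¹' {c})).toReal
  have := Measure.isProbabilityMeasure_map (μ := μ) hC.aemeasurable
  have := Measure.isProbabilityMeasure_map (μ := μ) (hX.prodMk hC).aemeasurable
  rw [← tendsto_add_atTop_iff_nat 1]
  refine squeeze_zero_norm (fun n => ?_) ((tendsto_add_atTop_iff_nat 1).2
    (tendsto_const_div_atTop_nhds_zero_nat (B - ε + (B - ε) ^ 2 / ε)))
  simpa using abs_integral_log_self_normalized_le hw hε hratio n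
end

section
/- If sup_{z ∈ S^{d_z−1}} | m_N(z) − η_c(z) | → 0 almost surely as N → ∞, then the plug-in centroid estimates converge almost surely to the class-conditional mean: f̂_N(c) → E[ η_c(Z) Z ] / E[ η_c(Z) ] = E[ Z | C = c ]. (Proposition 3: consistency of the estimator f̂ of the orthogonal projection f̄, given the uniform almost-sure consistency of the underlying posterior estimates.) -/
/-!
Write `s = {C = c}`. The verification property of `η` says that the pushforward of `μ` under `Z`
with density `η` is the pushforward of `μ` restricted to `s`; hence `E[η(Z) Z] = E[Z; s]` and
`E[η(Z)] = P(s)`. By the strong law of large numbers, the averages of `η(Z_j)` and `η(Z_j) Z_j`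
converge almost surely to these two expectations. Replacing the weights `η(Z_j)` by `m_N(Z_j)`
moves each average by at most `sup_{z ∈ S} |m_N(z) - η(z)|`, because `‖Z_j‖ = 1`, so the averages
built from `m_N` have the same limits, and the centroid is their quotient.
-/

open MeasureTheory ProbabilityTheory Filter Finset
open scoped Topology

section Posterior

variable {Ω E : Type*} [MeasurableSpace Ω] [MeasurableSpace E] {μ : Measure Ω} [IsFiniteMeasure μ]
  {X : Ω → E} {η : E → ℝ} {s : Set Ω}

theorem withDensity_map_eq_map_restrict (hX : Measurable X) (hη_nonneg : 0 ≤ η)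
    (hη_int : Integrable η (μ.map X))
    (hver : ∀ A, MeasurableSet A → ∫ z in A, η z ∂(μ.map X) = (μ (X ⁻¹' A ∩ s)).toReal) :
    (μ.map X).withDensity (fun z => ENNReal.ofReal (η z)) = (μ.restrict s).map X := by
  ext A hA
  rw [withDensity_apply _ hA, Measure.map_apply hX hA, Measure.restrict_apply (hX hA),
    ← ofReal_integral_eq_lintegral_ofReal hη_int.integrableOn (ae_of_all _ fun z => hη_nonneg z),
    hver A hA, ENNReal.ofReal_toReal (measure_ne_top _ _)]

theorem integral_comp_smul_eq_setIntegral {F : Type*} [NormedAddCommGroup F] [NormedSpace ℝ F]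
    (hX : Measurable X) (hη : Measurable η) (hη_nonneg : 0 ≤ η) (hη_int : Integrable η (μ.map X))
    (hver : ∀ A, MeasurableSet A → ∫ z in A, η z ∂(μ.map X) = (μ (X ⁻¹' A ∩ s)).toReal)
    {g : E → F} (hg : StronglyMeasurable g) :
    ∫ ω, η (X ω) • g (X ω) ∂μ = ∫ ω in s, g (X ω) ∂μ := calc
  ∫ ω, η (X ω) • g (X ω) ∂μ = ∫ z, η z • g z ∂(μ.map X) :=
    (integral_map hX.aemeasurable (hη.stronglyMeasurable.smul hg).aestronglyMeasurable).symm
  _ = ∫ z, g z ∂((μ.map X).withDensity fun z => ENNReal.ofReal (η z)) := by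
    rw [integral_withDensity_eq_integral_toReal_smul hη.ennreal_ofReal
      (ae_of_all _ fun _ => ENNReal.ofReal_lt_top)]
    simp only [ENNReal.toReal_ofReal (hη_nonneg _)]
  _ = ∫ ω in s, g (X ω) ∂μ := by
    rw [withDensity_map_eq_map_restrict hX hη_nonneg hη_int hver,
      integral_map hX.aemeasurable hg.aestronglyMeasurable]

end Posterior

theorem strong_law_ae_comp {Ω α E : Type*} [MeasurableSpace Ω] {μ : Measure Ω} [MeasurableSpace α]
    [NormedAddCommGroup E] [NormedSpace ℝ E] [CompleteSpace E] [MeasurableSpace E] [BorelSpace E]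
    {P : ℕ → Ω → α} {P₀ : Ω → α} {φ : α → E} (hindep : iIndepFun P μ)
    (hident : ∀ j, IdentDistrib (P j) P₀ μ μ) (hφ : Measurable φ)
    (hint : Integrable (fun ω => φ (P₀ ω)) μ) :
    ∀ᵐ ω ∂μ, Tendsto (fun N : ℕ => (N : ℝ)⁻¹ • ∑ j ∈ range N, φ (P j ω)) atTop
      (𝓝 (∫ ω, φ (P₀ ω) ∂μ)) := by
  have hidentφ : ∀ j, IdentDistrib (φ ∘ P j) (φ ∘ P₀) μ μ := fun j => (hident j).comp hφ
  have := strong_law_ae (fun j => φ ∘ P j) ((hidentφ 0).integrable_iff.mpr hint)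
    (fun i j hij => (hindep.indepFun hij).comp hφ hφ) fun j => (hidentφ j).trans (hidentφ 0).symm
  rwa [(hidentφ 0).integral_eq] at this

theorem abs_sub_le_iSup_of_mem_Icc {α : Type*} {f g : α → ℝ} (hf : ∀ x, f x ∈ Set.Icc 0 1)
    (hg : ∀ x, g x ∈ Set.Icc 0 1) {s : Set α} {x : α} (hx : x ∈ s) :
    |f x - g x| ≤ ⨆ y : s, |f y - g y| := by
  refine le_ciSup (f := fun y : s => |f y - g y|) ⟨1, ?_⟩ ⟨x, hx⟩
  rintro _ ⟨y, rfl⟩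
  exact abs_sub_le_of_nonneg_of_le (hf y).1 (hf y).2 (hg y).1 (hg y).2

section Averages

variable {E : Type*} [SeminormedAddCommGroup E] [NormedSpace ℝ E]

theorem norm_average_smul_sub_le {w w' : ℕ → ℝ} {v : ℕ → E} {ε : ℝ} (hv : ∀ j, ‖v j‖ ≤ 1)
    (hw : ∀ j, |w j - w' j| ≤ ε) (N : ℕ) :
    ‖(N : ℝ)⁻¹ • ∑ j ∈ range N, w j • v j - (N : ℝ)⁻¹ • ∑ j ∈ range N, w' j • v j‖ ≤ ε := by
  have hε : 0 ≤ ε := (abs_nonneg _).trans (hw 0)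
  have hsum : ‖∑ j ∈ range N, (w j - w' j) • v j‖ ≤ N * ε := calc
    _ ≤ ∑ j ∈ range N, ‖(w j - w' j) • v j‖ := norm_sum_le _ _
    _ ≤ ∑ _j ∈ range N, ε := sum_le_sum fun j _ => by
      rw [norm_smul, Real.norm_eq_abs]
      exact (mul_le_of_le_one_right (abs_nonneg _) (hv j)).trans (hw j)
    _ = N * ε := by rw [sum_const, card_range, nsmul_eq_mul]
  rw [← smul_sub, ← sum_sub_distrib]
  simp only [← sub_smul]
  rw [norm_smul, norm_inv, Real.norm_natCast]
  rcases N.eq_zero_or_pos with rfl | hN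
  · simpa using hε
  · rwa [inv_mul_le_iff₀ (by positivity)]

theorem tendsto_average_of_uniform_weights {w : ℕ → ℕ → ℝ} {w' : ℕ → ℝ} {v : ℕ → E}
    {ε : ℕ → ℝ} {L : E} (hv : ∀ j, ‖v j‖ ≤ 1) (hw : ∀ N j, |w N j - w' j| ≤ ε N)
    (hε : Tendsto ε atTop (𝓝 0))
    (h : Tendsto (fun N : ℕ => (N : ℝ)⁻¹ • ∑ j ∈ range N, w' j • v j) atTop (𝓝 L)) :
    Tendsto (fun N : ℕ => (N : ℝ)⁻¹ • ∑ j ∈ range N, w N j • v j) atTop (𝓝 L) := by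
  have hdiff := squeeze_zero_norm (fun N => norm_average_smul_sub_le hv (hw N) N) hε
  simpa using hdiff.add h

theorem tendsto_inv_smul_of_tendsto_averages {S : ℕ → ℝ} {T : ℕ → E} {a : ℝ} {b : E}
    (ha : a ≠ 0) (hS : Tendsto (fun N : ℕ => (N : ℝ)⁻¹ * S N) atTop (𝓝 a))
    (hT : Tendsto (fun N : ℕ => (N : ℝ)⁻¹ • T N) atTop (𝓝 b)) :
    Tendsto (fun N => (S N)⁻¹ • T N) atTop (𝓝 (a⁻¹ • b)) := by
  refine ((hS.inv₀ ha).smul hT).congr' ?_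
  filter_upwards [eventually_ne_atTop 0] with N hN
  rw [smul_smul, mul_inv, inv_inv, mul_right_comm, mul_inv_cancel₀ (Nat.cast_ne_zero.mpr hN),
    one_mul]

end Averages

theorem stmt_11_general {Ω : Type*} [MeasurableSpace Ω] (μ : Measure Ω) [IsProbabilityMeasure μ]
    {dz : ℕ} {𝒞 : Type*} [MeasurableSpace 𝒞]
    (Z : ℕ → Ω → EuclideanSpace ℝ (Fin dz)) (C : ℕ → Ω → 𝒞)
    (Z₀ : Ω → EuclideanSpace ℝ (Fin dz)) (C₀ : Ω → 𝒞)
    (hZ₀ : Measurable Z₀)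
    -- all the `Z_j` (and the reference `Z`) take values in the unit sphere
    (hZ₀sph : ∀ ω, ‖Z₀ ω‖ = 1) (hZsph : ∀ j ω, ‖Z j ω‖ = 1)
    -- the pairs `(Z_j, C_j)` are i.i.d. copies of `(Z, C)`
    (hindep : iIndepFun (fun j ω => (Z j ω, C j ω)) μ)
    (hident : ∀ j, IdentDistrib (fun ω => (Z j ω, C j ω)) (fun ω => (Z₀ ω, C₀ ω)) μ μ)
    (c : 𝒞) (hc : 0 < μ (C₀ ⁻¹' {c}))
    -- `η` is a measurable version of the posterior `z ↦ P(C = c | Z = z)`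
    (η : EuclideanSpace ℝ (Fin dz) → ℝ) (hηmeas : Measurable η)
    (hη01 : ∀ z, η z ∈ Set.Icc (0 : ℝ) 1)
    (hηver : ∀ A : Set (EuclideanSpace ℝ (Fin dz)), MeasurableSet A →
      ∫ z in A, η z ∂(μ.map Z₀) = (μ (Z₀ ⁻¹' A ∩ C₀ ⁻¹' {c})).toReal)
    -- `m N` is a random function built from the first `N` samples, valued in `[0,1]`
    (m : ℕ → Ω → EuclideanSpace ℝ (Fin dz) → ℝ)
    (hm01 : ∀ N ω z, m N ω z ∈ Set.Icc (0 : ℝ) 1)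
    -- uniform almost-sure consistency of the posterior estimates on the sphere
    (hunif : ∀ᵐ ω ∂μ, Tendsto
      (fun N => ⨆ z : Metric.sphere (0 : EuclideanSpace ℝ (Fin dz)) 1, |m N ω z - η z|)
      atTop (𝓝 0)) :
    (∀ᵐ ω ∂μ, Tendsto
        (fun N => (∑ j ∈ Finset.range N, m N ω (Z j ω))⁻¹ •
          ∑ j ∈ Finset.range N, m N ω (Z j ω) • Z j ω)
        atTop (𝓝 ((∫ ω, η (Z₀ ω) ∂μ)⁻¹ • ∫ ω, η (Z₀ ω) • Z₀ ω ∂μ)))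
    ∧ (∫ ω, η (Z₀ ω) ∂μ)⁻¹ • (∫ ω, η (Z₀ ω) • Z₀ ω ∂μ)
        = (μ (C₀ ⁻¹' {c})).toReal⁻¹ • ∫ ω in C₀ ⁻¹' {c}, Z₀ ω ∂μ := by
  have hη_nonneg : 0 ≤ η := fun z => (hη01 z).1
  have hη_norm : ∀ z, ‖η z‖ ≤ 1 := fun z => by
    rw [Real.norm_of_nonneg (hη01 z).1]; exact (hη01 z).2
  have hη_int : Integrable η (μ.map Z₀) :=
    .of_bound hηmeas.aestronglyMeasurable 1 (ae_of_all _ hη_norm)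
  have hmass : ∫ ω, η (Z₀ ω) ∂μ = (μ (C₀ ⁻¹' {c})).toReal := by
    simpa [Measure.real] using integral_comp_smul_eq_setIntegral hZ₀ hηmeas hη_nonneg hη_int hηver
      (stronglyMeasurable_const (b := (1 : ℝ)))
  have hcentroid : ∫ ω, η (Z₀ ω) • Z₀ ω ∂μ = ∫ ω in C₀ ⁻¹' {c}, Z₀ ω ∂μ :=
    integral_comp_smul_eq_setIntegral hZ₀ hηmeas hη_nonneg hη_int hηver stronglyMeasurable_id
  have hmass_ne : ∫ ω, η (Z₀ ω) ∂μ ≠ 0 := by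
    rw [hmass]; exact (ENNReal.toReal_pos hc.ne' (measure_ne_top _ _)).ne'
  refine ⟨?_, by rw [hmass, hcentroid]⟩
  have hlaw_mass := strong_law_ae_comp (φ := fun p : _ × 𝒞 => η p.1) hindep hident
    (hηmeas.comp measurable_fst)
    (.of_bound (hηmeas.comp hZ₀).aestronglyMeasurable 1 (ae_of_all _ fun ω => hη_norm (Z₀ ω)))
  have hlaw_centroid := strong_law_ae_comp (φ := fun p : _ × 𝒞 => η p.1 • p.1) hindep hident
    ((hηmeas.comp measurable_fst).smul measurable_fst)
    (.of_bound ((hηmeas.comp hZ₀).smul hZ₀).aestronglyMeasurable 1 (ae_of_all _ fun ω => by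
      rw [norm_smul, hZ₀sph, mul_one]; exact hη_norm (Z₀ ω)))
  filter_upwards [hlaw_mass, hlaw_centroid, hunif] with ω hω_mass hω_centroid hω_unif
  have hclose : ∀ N j, |m N ω (Z j ω) - η (Z j ω)| ≤
      ⨆ z : Metric.sphere (0 : EuclideanSpace ℝ (Fin dz)) 1, |m N ω z - η z| := fun N j =>
    abs_sub_le_iSup_of_mem_Icc (hm01 N ω) hη01 (mem_sphere_zero_iff_norm.mpr (hZsph j ω))
  refine tendsto_inv_smul_of_tendsto_averages hmass_ne ?_
    (tendsto_average_of_uniform_weights (fun j => (hZsph j ω).le) hclose hω_unif hω_centroid)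
  simpa using tendsto_average_of_uniform_weights (v := fun _ => (1 : ℝ)) (fun _ => by simp)
    hclose hω_unif (by simpa using hω_mass)

/-- Proposition 3, consistency of the plug-in centroid estimator:
for i.i.d. pairs `(Z_j, C_j)` with `Z_j` on the unit sphere `S^{d_z-1}`, if the random
posterior estimates `m_N` converge to the posterior `η_c` uniformly on the sphere, almost
surely, then the plug-in centroid estimates
`f̂_N(c) = (Σ_{j≤N} m_N(Z_j) • Z_j) / (Σ_{j≤N} m_N(Z_j))` converge almost surely to
`E[η_c(Z) Z] / E[η_c(Z)] = E[Z | C = c]`. -/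
theorem stmt_11 {Ω : Type*} [MeasurableSpace Ω] (μ : Measure Ω) [IsProbabilityMeasure μ]
    {dz : ℕ} (hdz : 0 < dz) {𝒞 : Type*} [MeasurableSpace 𝒞] [MeasurableSingletonClass 𝒞]
    [Finite 𝒞]
    (Z : ℕ → Ω → EuclideanSpace ℝ (Fin dz)) (C : ℕ → Ω → 𝒞)
    (Z₀ : Ω → EuclideanSpace ℝ (Fin dz)) (C₀ : Ω → 𝒞)
    (hZ : ∀ j, Measurable (Z j)) (hC : ∀ j, Measurable (C j))
    (hZ₀ : Measurable Z₀) (hC₀ : Measurable C₀)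
    -- all the `Z_j` (and the reference `Z`) take values in the unit sphere
    (hZ₀sph : ∀ ω, ‖Z₀ ω‖ = 1) (hZsph : ∀ j ω, ‖Z j ω‖ = 1)
    -- the pairs `(Z_j, C_j)` are i.i.d. copies of `(Z, C)`
    (hindep : iIndepFun (fun j ω => (Z j ω, C j ω)) μ)
    (hident : ∀ j, IdentDistrib (fun ω => (Z j ω, C j ω)) (fun ω => (Z₀ ω, C₀ ω)) μ μ)
    (c : 𝒞) (hc : 0 < μ (C₀ ⁻¹' {c}))
    -- `η` is a measurable version of the posterior `z ↦ P(C = c | Z = z)`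
    (η : EuclideanSpace ℝ (Fin dz) → ℝ) (hηmeas : Measurable η)
    (hη01 : ∀ z, η z ∈ Set.Icc (0 : ℝ) 1)
    (hηver : ∀ A : Set (EuclideanSpace ℝ (Fin dz)), MeasurableSet A →
      ∫ z in A, η z ∂(μ.map Z₀) = (μ (Z₀ ⁻¹' A ∩ C₀ ⁻¹' {c})).toReal)
    -- `m N` is a random function built from the first `N` samples, valued in `[0,1]`
    (m : ℕ → Ω → EuclideanSpace ℝ (Fin dz) → ℝ)
    (hm01 : ∀ N ω z, m N ω z ∈ Set.Icc (0 : ℝ) 1)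
    -- uniform almost-sure consistency of the posterior estimates on the sphere
    (hunif : ∀ᵐ ω ∂μ, Tendsto
      (fun N => ⨆ z : Metric.sphere (0 : EuclideanSpace ℝ (Fin dz)) 1, |m N ω z - η z|)
      atTop (𝓝 0)) :
    (∀ᵐ ω ∂μ, Tendsto
        (fun N => (∑ j ∈ Finset.range N, m N ω (Z j ω))⁻¹ •
          ∑ j ∈ Finset.range N, m N ω (Z j ω) • Z j ω)
        atTop (𝓝 ((∫ ω, η (Z₀ ω) ∂μ)⁻¹ • ∫ ω, η (Z₀ ω) • Z₀ ω ∂μ)))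
    ∧ (∫ ω, η (Z₀ ω) ∂μ)⁻¹ • (∫ ω, η (Z₀ ω) • Z₀ ω ∂μ)
        = (μ (C₀ ⁻¹' {c})).toReal⁻¹ • ∫ ω in C₀ ⁻¹' {c}, Z₀ ω ∂μ :=
  stmt_11_general μ Z C Z₀ C₀ hZ₀ hZ₀sph hZsph hindep hident c hc η hηmeas hη01 hηver m hm01 hunif
end
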